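/- arXiv:2502.09995 — 4 statements merged into one kernel-verified Lean document; each statement's English description precedes it below -/
import Mathlib

section
/- Let T ⊆ ℕ* be a finitely branching rooted tree in which every node has at least two successors, and let S ⊆ T be a subtree without leaves that is level-wise uniformly branching. Then, in the ultrametric space [T], the Hausdorff dimension of the set of paths [S] equals liminf_{n→∞} log|S_n| / log|T_n|, where S_n and T_n denote the sets of length-n strings in S and T respectively. -/
/-!
Give the cylinder of a node of `S_n` the mass `1 / |S_n|`; uniform branching makes these masses
additive, so finitely many cylinders covering `[S]` have total mass at least `1`.
A set of diameter `1 / |T_n|` in `[T]` lies in one cylinder of level `n`, and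
`1 / |S_n| = (1 / |T_n|) ^ r_n` with `r_n = log |S_n| / log |T_n|`. Covering `[S]` by its `|S_n|`
cylinders of level `n` along levels with `r_n < d` gives `μH[d] = 0`. Conversely, for `r` below
`liminf r_n`, compactness of `[S]` turns a countable cover by small sets into a finite cover by
cylinders of mass at most `diam ^ r` plus an arbitrarily small excess, so `μH[r] ≥ 1`.
-/

open Filter MeasureTheory

namespace FractalTree

/-- The `n`-th level of a tree `T ⊆ ℕ*`: the strings in `T` of length `n`. -/
def level (T : Set (List ℕ)) (n : ℕ) : Set (List ℕ) := {σ | σ ∈ T ∧ σ.length = n}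

/-- A tree is a nonempty set of finite sequences closed under initial segments. -/
def IsTree (T : Set (List ℕ)) : Prop :=
  T.Nonempty ∧ ∀ σ ∈ T, ∀ τ : List ℕ, τ <+: σ → τ ∈ T

/-- The immediate successors of a node `σ` in `T`. -/
def succs (T : Set (List ℕ)) (σ : List ℕ) : Set ℕ := {a | σ ++ [a] ∈ T}

/-- Every node of `T` has finitely many immediate successors. -/
def FinBranching (T : Set (List ℕ)) : Prop := ∀ σ ∈ T, (succs T σ).Finite

/-- Every node of `T` has at least two immediate successors. -/
def AtLeastTwo (T : Set (List ℕ)) : Prop :=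
  ∀ σ ∈ T, ∃ a b : ℕ, a ≠ b ∧ a ∈ succs T σ ∧ b ∈ succs T σ

/-- Every node of `S` has at least one immediate successor (no leaves). -/
def NoLeaves (S : Set (List ℕ)) : Prop := ∀ σ ∈ S, ∃ a : ℕ, a ∈ succs S σ

/-- `S` is level-wise uniformly branching: the number of immediate successors of a node
only depends on its level. -/
def UnifBranching (S : Set (List ℕ)) : Prop :=
  ∀ n : ℕ, ∀ σ ∈ level S n, ∀ τ ∈ level S n, (succs S σ).ncard = (succs S τ).ncard

/-- The initial segment of length `n` of an infinite sequence `f`. -/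
def seg (f : ℕ → ℕ) (n : ℕ) : List ℕ := (List.range n).map f

/-- The set `[T]` of infinite paths through `T`. -/
def paths (T : Set (List ℕ)) : Set (ℕ → ℕ) := {f | ∀ n : ℕ, seg f n ∈ T}

open Classical in
/-- The ultrametric on `[T]`: `d(f,g) = 1/|T_n|` where `n` is the least index with
`f n ≠ g n`, and `d(f,f) = 0`. -/
noncomputable def treeDist (T : Set (List ℕ)) (f g : ℕ → ℕ) : ℝ :=
  if h : ∃ n, f n ≠ g n then 1 / ((level T (Nat.find h)).ncard : ℝ) else 0

open ENNReal Topology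

@[simp] lemma seg_length (f : ℕ → ℕ) (n : ℕ) : (seg f n).length = n := by simp [seg]

lemma seg_succ (f : ℕ → ℕ) (n : ℕ) : seg f (n + 1) = seg f n ++ [f n] := by
  simp [seg, List.range_succ]

lemma seg_eq_ofFn (f : ℕ → ℕ) (n : ℕ) : seg f n = List.ofFn fun i : Fin n => f i := by
  rw [seg, List.ofFn_eq_map, ← List.map_coe_finRange_eq_range, List.map_map]
  rfl

lemma seg_eq_seg_iff {f g : ℕ → ℕ} {n : ℕ} : seg f n = seg g n ↔ ∀ i < n, f i = g i := by
  simp [seg_eq_ofFn, List.ofFn_inj, funext_iff, Fin.forall_iff]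

lemma seg_prefix_seg (f : ℕ → ℕ) {m n : ℕ} (h : m ≤ n) : seg f m <+: seg f n := by
  have : (seg f n).take m = seg f m := by
    rw [seg, ← List.map_take, List.take_range, Nat.min_eq_left h, seg]
  exact this ▸ (seg f n).take_prefix m

lemma continuous_seg (n : ℕ) : Continuous fun f : ℕ → ℕ => seg f n := by
  simp_rw [seg_eq_ofFn]
  exact (continuous_of_discreteTopology (f := List.ofFn (n := n) (α := ℕ))).comp
    (continuous_pi fun i => continuous_apply _)

def cylinder (σ : List ℕ) : Set (ℕ → ℕ) := {f | seg f σ.length = σ}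

lemma isOpen_cylinder (σ : List ℕ) : IsOpen (cylinder σ) :=
  (isOpen_discrete {σ}).preimage (continuous_seg _)

lemma mem_cylinder_seg {f g : ℕ → ℕ} {n : ℕ} :
    g ∈ cylinder (seg f n) ↔ ∀ i < n, g i = f i := by
  simp [cylinder, seg_eq_seg_iff]

lemma isClosed_paths (S : Set (List ℕ)) : IsClosed (paths S) := by
  have : paths S = ⋂ n, (fun f => seg f n) ⁻¹' S := by ext; simp [paths]
  exact this ▸ isClosed_iInter fun n => (isClosed_discrete S).preimage (continuous_seg n)

lemma paths_mono {S T : Set (List ℕ)} (h : S ⊆ T) : paths S ⊆ paths T :=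
  fun _ hf n => h (hf n)

lemma seg_mem_level {S : Set (List ℕ)} {f : ℕ → ℕ} (hf : f ∈ paths S) (n : ℕ) :
    seg f n ∈ level S n :=
  ⟨hf n, seg_length f n⟩

namespace IsTree

variable {S : Set (List ℕ)}

lemma nil_mem (hS : IsTree S) : [] ∈ S :=
  let ⟨⟨σ, hσ⟩, hcl⟩ := hS
  hcl σ hσ [] List.nil_prefix

lemma take_mem (hS : IsTree S) {σ : List ℕ} (hσ : σ ∈ S) (n : ℕ) : σ.take n ∈ S :=
  hS.2 σ hσ _ (σ.take_prefix n)

end IsTree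

section Levels

variable {S : Set (List ℕ)}

lemma level_mono {T : Set (List ℕ)} (h : S ⊆ T) (n : ℕ) : level S n ⊆ level T n :=
  fun _ hσ => ⟨h hσ.1, hσ.2⟩

lemma take_mem_level (hS : IsTree S) {ρ : List ℕ} {m n : ℕ} (hρ : ρ ∈ level S n)
    (h : m ≤ n) : ρ.take m ∈ level S m :=
  ⟨hS.take_mem hρ.1 m, by simp [hρ.2, h]⟩

lemma setOf_take_eq_eq_image {τ : List ℕ} {m : ℕ} (hτ : τ.length = m) :
    {ρ ∈ level S (m + 1) | ρ.take m = τ} = (τ ++ [·]) '' succs S τ := by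
  ext ρ
  constructor
  · rintro ⟨⟨hρS, hρ⟩, rfl⟩
    have hsplit : ρ.take m ++ [ρ[m]] = ρ := by
      rw [List.take_concat_get', List.take_of_length_le hρ.le]
    exact ⟨ρ[m], by rwa [succs, Set.mem_ofPred_eq, hsplit], hsplit⟩
  · rintro ⟨a, ha, rfl⟩
    exact ⟨⟨ha, by simp [hτ]⟩, by simp [← hτ]⟩

lemma ncard_setOf_take_mem {A : Finset (List ℕ)} {m : ℕ} (hfin : (level S (m + 1)).Finite)
    (hA : ↑A ⊆ level S m) :
    {ρ ∈ level S (m + 1) | ρ.take m ∈ A}.ncard = ∑ τ ∈ A, (succs S τ).ncard := by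
  have hunion : {ρ ∈ level S (m + 1) | ρ.take m ∈ A} =
      ⋃ τ ∈ (A : Set (List ℕ)), {ρ ∈ level S (m + 1) | ρ.take m = τ} := by
    ext ρ; simp
  rw [hunion, A.finite_toSet.ncard_biUnion (fun τ _ => hfin.subset (Set.sep_subset _ _)),
    finsum_mem_coe_finset]
  · refine Finset.sum_congr rfl fun τ hτ => ?_
    rw [setOf_take_eq_eq_image (hA hτ).2,
      Set.ncard_image_of_injective _ fun a b h => by simpa using h]
  · exact fun τ _ τ' _ hne => Set.disjoint_left.2 fun ρ h h' => hne (h.2.symm.trans h'.2)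

lemma setOf_take_mem_level (hS : IsTree S) (m : ℕ) :
    {ρ ∈ level S (m + 1) | ρ.take m ∈ level S m} = level S (m + 1) :=
  Set.sep_eq_self_iff_mem_true.2 fun _ hρ => take_mem_level hS hρ m.le_succ

lemma ncard_level_succ (hS : IsTree S) (hfin : ∀ n, (level S n).Finite) (m : ℕ) :
    (level S (m + 1)).ncard = ∑ τ ∈ (hfin m).toFinset, (succs S τ).ncard := by
  rw [← ncard_setOf_take_mem (m := m) (hfin _) (by simp)]
  simp only [Set.Finite.mem_toFinset, setOf_take_mem_level hS]

lemma level_zero (hS : IsTree S) : level S 0 = {[]} := by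
  ext σ
  simp only [level, Set.mem_ofPred_eq, List.length_eq_zero_iff, Set.mem_singleton_iff]
  exact ⟨And.right, fun h => ⟨h ▸ hS.nil_mem, h⟩⟩

lemma level_finite (hS : IsTree S) (hfin : FinBranching S) (n : ℕ) : (level S n).Finite := by
  induction n with
  | zero => simp [level_zero hS]
  | succ n ih =>
    rw [← setOf_take_mem_level hS]
    have : {ρ ∈ level S (n + 1) | ρ.take n ∈ level S n} =
        ⋃ τ ∈ level S n, {ρ ∈ level S (n + 1) | ρ.take n = τ} := by
      ext ρ; simp
    rw [this]
    exact ih.biUnion fun τ hτ => by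
      rw [setOf_take_eq_eq_image hτ.2]; exact (hfin τ hτ.1).image _

end Levels

section Paths

variable {S : Set (List ℕ)}

lemma paths_inter_cylinder_nonempty (hS : IsTree S) (hSnl : NoLeaves S) {σ : List ℕ}
    (hσ : σ ∈ S) : (paths S ∩ cylinder σ).Nonempty := by
  choose! next hnext using hSnl
  let walk : ℕ → List ℕ := fun k => (fun τ => τ ++ [next τ])^[k] σ
  have walk_succ (k : ℕ) : walk (k + 1) = walk k ++ [next (walk k)] :=
    Function.iterate_succ_apply' _ k σ
  have walk_mem (k : ℕ) : walk k ∈ S := by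
    induction k with
    | zero => exact hσ
    | succ k ih => rw [walk_succ]; exact hnext _ ih
  have walk_length (k : ℕ) : (walk k).length = σ.length + k := by
    induction k with
    | zero => rfl
    | succ k ih => rw [walk_succ, List.length_append, ih]; rfl
  let f : ℕ → ℕ := fun i => (walk (i + 1)).getD i 0
  have seg_f (k : ℕ) : seg f k = (walk k).take k := by
    induction k with
    | zero => rfl
    | succ k ih =>
      have hk : k < (walk (k + 1)).length := by rw [walk_length]; omega
      rw [seg_succ, ih, List.take_add_one, List.getElem?_eq_getElem hk]
      congr 1
      · rw [walk_succ, List.take_append_of_le_length (by rw [walk_length]; omega)]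
      · simp [f, List.getElem?_eq_getElem hk]
  refine ⟨f, fun k => seg_f k ▸ hS.take_mem (walk_mem k) k, ?_⟩
  have prefix_walk (k : ℕ) : σ <+: walk k := by
    induction k with
    | zero => exact List.prefix_refl σ
    | succ k ih => exact ih.trans (walk_succ k ▸ List.prefix_append _ _)
  rw [cylinder, Set.mem_ofPred_eq, seg_f, ← List.prefix_iff_eq_take.1 (prefix_walk _)]

lemma level_nonempty (hS : IsTree S) (hSnl : NoLeaves S) (n : ℕ) : (level S n).Nonempty :=
  let ⟨_, hf, _⟩ := paths_inter_cylinder_nonempty hS hSnl hS.nil_mem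
  ⟨_, seg_mem_level hf n⟩

lemma ncard_level_pos (hS : IsTree S) (hSnl : NoLeaves S) (hfin : ∀ n, (level S n).Finite)
    (n : ℕ) : 0 < (level S n).ncard :=
  (Set.ncard_pos (hfin n)).2 (level_nonempty hS hSnl n)

lemma isCompact_paths (hfin : ∀ n, (level S n).Finite) : IsCompact (paths S) := by
  have hsub : paths S ⊆
      Set.univ.pi fun n => (fun ρ : List ℕ => ρ.getD n 0) '' level S (n + 1) :=
    fun f hf n _ => ⟨seg f (n + 1), seg_mem_level hf _, by simp [seg_succ]⟩
  exact (isCompact_univ_pi fun n => ((hfin _).image _).isCompact).of_isClosed_subset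
    (isClosed_paths S) hsub

end Paths

def descendants (S : Set (List ℕ)) (σ : List ℕ) (m : ℕ) : Set (List ℕ) :=
  {ρ ∈ level S m | σ <+: ρ}

section Counting

variable {S : Set (List ℕ)}

lemma descendants_nil (m : ℕ) : descendants S [] m = level S m := by
  simp [descendants]

lemma descendants_length {σ : List ℕ} (hσ : σ ∈ S) : descendants S σ σ.length = {σ} := by
  ext ρ
  simp only [descendants, level, Set.mem_ofPred_eq, Set.mem_singleton_iff]
  constructor
  · rintro ⟨⟨-, hlen⟩, hpre⟩
    exact (hpre.eq_of_length hlen.symm).symm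
  · rintro rfl
    exact ⟨⟨hσ, rfl⟩, List.prefix_refl _⟩

lemma descendants_succ (hS : IsTree S) {σ : List ℕ} {m : ℕ} (h : σ.length ≤ m) :
    descendants S σ (m + 1) = {ρ ∈ level S (m + 1) | ρ.take m ∈ descendants S σ m} := by
  ext ρ
  constructor
  · rintro ⟨hρ, hσρ⟩
    exact ⟨hρ, take_mem_level hS hρ m.le_succ, List.prefix_take_iff.2 ⟨hσρ, h⟩⟩
  · rintro ⟨hρ, -, hσρ⟩
    exact ⟨hρ, hσρ.trans (ρ.take_prefix m)⟩

lemma ncard_descendants_succ (hS : IsTree S) (hfin : ∀ n, (level S n).Finite)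
    {σ : List ℕ} {m b : ℕ} (hb : ∀ τ ∈ level S m, (succs S τ).ncard = b) (h : σ.length ≤ m) :
    (descendants S σ (m + 1)).ncard = b * (descendants S σ m).ncard := by
  have hsub : descendants S σ m ⊆ level S m := Set.sep_subset _ _
  have hDfin : (descendants S σ m).Finite := (hfin m).subset hsub
  have hcard := ncard_setOf_take_mem (A := hDfin.toFinset) (hfin (m + 1)) (by simpa using hsub)
  simp only [Set.Finite.mem_toFinset] at hcard
  rw [descendants_succ hS h, hcard,
    Finset.sum_congr rfl fun τ hτ => hb τ (hsub (hDfin.mem_toFinset.1 hτ)), Finset.sum_const,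
    smul_eq_mul, Set.ncard_eq_toFinset_card _ hDfin, mul_comm]

lemma ncard_descendants_mul (hS : IsTree S) (hfin : ∀ n, (level S n).Finite)
    (hSub : UnifBranching S) {σ : List ℕ} (hσ : σ ∈ S) {m : ℕ} (h : σ.length ≤ m) :
    (descendants S σ m).ncard * (level S σ.length).ncard = (level S m).ncard := by
  induction m, h using Nat.le_induction with
  | base => rw [descendants_length hσ, Set.ncard_singleton, one_mul]
  | succ m hm ih =>
    obtain ⟨b, hb⟩ : ∃ b, ∀ τ ∈ level S m, (succs S τ).ncard = b := by
      rcases (level S m).eq_empty_or_nonempty with h | ⟨τ₀, hτ₀⟩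
      · exact ⟨0, by simp [h]⟩
      · exact ⟨_, fun τ hτ => hSub m τ hτ τ₀ hτ₀⟩
    rw [ncard_descendants_succ hS hfin hb hm, ← descendants_nil (m + 1),
      ncard_descendants_succ hS hfin hb (σ := []) (Nat.zero_le m), descendants_nil, mul_assoc,
      ih]

end Counting

lemma one_le_sum_inv_ncard_of_paths_subset {S : Set (List ℕ)} (hS : IsTree S)
    (hSnl : NoLeaves S) (hfin : ∀ n, (level S n).Finite) (hSub : UnifBranching S)
    {ι : Type*} (I : Finset ι) (σ : ι → List ℕ) (hσ : ∀ i ∈ I, σ i ∈ S)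
    (hcov : paths S ⊆ ⋃ i ∈ I, cylinder (σ i)) :
    1 ≤ ∑ i ∈ I, ((level S (σ i).length).ncard : ℝ≥0∞)⁻¹ := by
  set M := I.sup fun i => (σ i).length
  have hM (i : ι) (hi : i ∈ I) : (σ i).length ≤ M :=
    Finset.le_sup (f := fun i => (σ i).length) hi
  have hlevel : level S M ⊆ ⋃ i ∈ I, descendants S (σ i) M := by
    intro τ hτ
    obtain ⟨f, hf, hfτ⟩ := paths_inter_cylinder_nonempty hS hSnl hτ.1
    obtain ⟨i, hi, hfi⟩ := Set.mem_iUnion₂.1 (hcov hf)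
    refine Set.mem_iUnion₂.2 ⟨i, hi, hτ, ?_⟩
    rw [← hfi, ← hfτ.out, hτ.2]
    exact seg_prefix_seg f (hM i hi)
  have hcard : (level S M).ncard ≤ ∑ i ∈ I, (descendants S (σ i) M).ncard :=
    (Set.ncard_le_ncard hlevel ((I.finite_toSet.biUnion fun i _ =>
      (hfin M).subset (Set.sep_subset _ _)))).trans (I.set_ncard_biUnion_le _)
  have hM0 : ((level S M).ncard : ℝ≥0∞) ≠ 0 := by
    simpa using (ncard_level_pos hS hSnl hfin M).ne'
  calc 1 = ((level S M).ncard : ℝ≥0∞)⁻¹ * (level S M).ncard :=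
        (ENNReal.inv_mul_cancel hM0 (ENNReal.natCast_ne_top _)).symm
    _ ≤ ((level S M).ncard : ℝ≥0∞)⁻¹ * ∑ i ∈ I, ((descendants S (σ i) M).ncard : ℝ≥0∞) := by
        gcongr; exact_mod_cast hcard
    _ = ∑ i ∈ I, ((level S (σ i).length).ncard : ℝ≥0∞)⁻¹ := by
        rw [Finset.mul_sum]
        refine Finset.sum_congr rfl fun i hi => ENNReal.eq_inv_of_mul_eq_one_left ?_
        rw [mul_assoc, ← Nat.cast_mul, ncard_descendants_mul hS hfin hSub (hσ i hi) (hM i hi),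
          ENNReal.inv_mul_cancel hM0 (ENNReal.natCast_ne_top _)]

section Growth

variable {T : Set (List ℕ)}

lemma AtLeastTwo.noLeaves (hT2 : AtLeastTwo T) : NoLeaves T := fun σ hσ =>
  let ⟨a, _, _, ha, _⟩ := hT2 σ hσ
  ⟨a, ha⟩

lemma ncard_level_lt_succ (hT : IsTree T) (hTfin : FinBranching T) (hT2 : AtLeastTwo T)
    (n : ℕ) : (level T n).ncard < (level T (n + 1)).ncard := by
  have hfin := level_finite hT hTfin
  have hpos := ncard_level_pos hT hT2.noLeaves hfin n
  have two_le (τ : List ℕ) (hτ : τ ∈ (hfin n).toFinset) : 2 ≤ (succs T τ).ncard := by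
    have hτT : τ ∈ T := ((hfin n).mem_toFinset.1 hτ).1
    obtain ⟨a, b, hab, ha, hb⟩ := hT2 τ hτT
    exact (Set.one_lt_ncard_iff (hTfin τ hτT)).2 ⟨a, b, ha, hb, hab⟩
  calc (level T n).ncard < (hfin n).toFinset.card • 2 := by
        rw [← Set.ncard_eq_toFinset_card _ (hfin n), smul_eq_mul]; omega
    _ ≤ (level T (n + 1)).ncard := by
        rw [ncard_level_succ hT hfin]; exact Finset.card_nsmul_le_sum _ _ _ two_le

lemma strictMono_ncard_level (hT : IsTree T) (hTfin : FinBranching T) (hT2 : AtLeastTwo T) :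
    StrictMono fun n => (level T n).ncard :=
  strictMono_nat_of_lt_succ (ncard_level_lt_succ hT hTfin hT2)

lemma one_lt_ncard_level (hT : IsTree T) (hTfin : FinBranching T) (hT2 : AtLeastTwo T)
    {n : ℕ} (hn : 0 < n) : 1 < (level T n).ncard := by
  simpa [level_zero hT] using strictMono_ncard_level hT hTfin hT2 hn

end Growth

lemma treeDist_eq {T : Set (List ℕ)} {f g : ℕ → ℕ} {k : ℕ} (hk : f k ≠ g k)
    (hmin : ∀ i < k, f i = g i) : treeDist T f g = 1 / ((level T k).ncard : ℝ) := by
  classical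
  have h : ∃ n, f n ≠ g n := ⟨k, hk⟩
  rw [treeDist, dif_pos h, (Nat.find_eq_iff h).2 ⟨hk, fun i hi => not_not.2 (hmin i hi)⟩]

section Embedding

variable {X : Type*} [PseudoMetricSpace X] {T : Set (List ℕ)} {φ : (ℕ → ℕ) → X}
  {f g : ℕ → ℕ}

lemma exists_edist_eq_of_ne
    (hφ : ∀ f ∈ paths T, ∀ g ∈ paths T, dist (φ f) (φ g) = treeDist T f g)
    (hfin : ∀ n, (level T n).Finite) (hf : f ∈ paths T) (hg : g ∈ paths T) (hfg : f ≠ g) :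
    ∃ k, (∀ i < k, f i = g i) ∧ f k ≠ g k ∧
      edist (φ f) (φ g) = ((level T k).ncard : ℝ≥0∞)⁻¹ := by
  classical
  have h : ∃ n, f n ≠ g n := Function.ne_iff.1 hfg
  have hpos : (0 : ℝ) < (level T (Nat.find h)).ncard := by
    exact_mod_cast (Set.ncard_pos (hfin _)).2 ⟨_, seg_mem_level hf _⟩
  refine ⟨Nat.find h, fun i hi => not_not.1 (Nat.find_min h hi), Nat.find_spec h, ?_⟩
  rw [edist_dist, hφ f hf g hg, treeDist_eq (Nat.find_spec h) fun i hi =>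
    not_not.1 (Nat.find_min h hi), one_div, ENNReal.ofReal_inv_of_pos hpos,
    ENNReal.ofReal_natCast]

lemma edist_le_of_forall_lt_eq
    (hφ : ∀ f ∈ paths T, ∀ g ∈ paths T, dist (φ f) (φ g) = treeDist T f g)
    (hT : IsTree T) (hTfin : FinBranching T) (hT2 : AtLeastTwo T)
    (hf : f ∈ paths T) (hg : g ∈ paths T) {n : ℕ} (hfg : ∀ i < n, f i = g i) :
    edist (φ f) (φ g) ≤ ((level T n).ncard : ℝ≥0∞)⁻¹ := by
  rcases eq_or_ne f g with rfl | hne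
  · simp
  obtain ⟨k, -, hk, hdist⟩ := exists_edist_eq_of_ne hφ (level_finite hT hTfin) hf hg hne
  have hnk : n ≤ k := not_lt.1 fun hkn => hk (hfg k hkn)
  rw [hdist, ENNReal.inv_le_inv]
  exact_mod_cast (strictMono_ncard_level hT hTfin hT2).monotone hnk

lemma forall_le_eq_of_edist_lt
    (hφ : ∀ f ∈ paths T, ∀ g ∈ paths T, dist (φ f) (φ g) = treeDist T f g)
    (hT : IsTree T) (hTfin : FinBranching T) (hT2 : AtLeastTwo T)
    (hf : f ∈ paths T) (hg : g ∈ paths T) {n : ℕ}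
    (hlt : edist (φ f) (φ g) < ((level T n).ncard : ℝ≥0∞)⁻¹) : ∀ i ≤ n, f i = g i := by
  rcases eq_or_ne f g with rfl | hne
  · simp
  obtain ⟨k, hk, -, hdist⟩ := exists_edist_eq_of_ne hφ (level_finite hT hTfin) hf hg hne
  have hnk : n < k := by
    refine not_le.1 fun hkn => hlt.not_ge ?_
    rw [hdist, ENNReal.inv_le_inv]
    exact_mod_cast (strictMono_ncard_level hT hTfin hT2).monotone hkn
  exact fun i hi => hk i (hi.trans_lt hnk)

lemma ediam_image_cylinder_le
    (hφ : ∀ f ∈ paths T, ∀ g ∈ paths T, dist (φ f) (φ g) = treeDist T f g)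
    (hT : IsTree T) (hTfin : FinBranching T) (hT2 : AtLeastTwo T) (σ : List ℕ) :
    Metric.ediam (φ '' (paths T ∩ cylinder σ)) ≤ ((level T σ.length).ncard : ℝ≥0∞)⁻¹ := by
  refine Metric.ediam_le ?_
  rintro _ ⟨f, ⟨hf, hfσ⟩, rfl⟩ _ ⟨g, ⟨hg, hgσ⟩, rfl⟩
  exact edist_le_of_forall_lt_eq hφ hT hTfin hT2 hf hg
    (seg_eq_seg_iff.1 (hfσ.trans hgσ.symm))

end Embedding

section Exponents

lemma logb_natCast_nonneg (b s : ℕ) : 0 ≤ Real.logb b s :=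
  div_nonneg (Real.log_natCast_nonneg s) (Real.log_natCast_nonneg b)

lemma logb_natCast_le_one {b s : ℕ} (h : s ≤ b) : Real.logb b s ≤ 1 := by
  refine div_le_one_of_le₀ ?_ (Real.log_natCast_nonneg b)
  rcases s.eq_zero_or_pos with rfl | hs
  · simpa using Real.log_natCast_nonneg b
  · exact Real.log_le_log (by exact_mod_cast hs) (by exact_mod_cast h)

lemma eventually_rpow_lt_of_lt_liminf {s b : ℕ → ℕ} (hb : ∀ᶠ n in atTop, 1 < b n) {r : ℝ}
    (hr : 0 ≤ r) (h : r < liminf (fun n => Real.logb (b n) (s n)) atTop) :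
    ∀ᶠ n in atTop, (b n : ℝ) ^ r < s n := by
  filter_upwards [eventually_lt_of_lt_liminf h (isBoundedUnder_of ⟨0, fun n =>
    logb_natCast_nonneg (b n) (s n)⟩), hb] with n hlt hbn
  have hs : 0 < s n := Nat.pos_of_ne_zero fun h0 => by simp [h0] at hlt; linarith
  exact (Real.lt_logb_iff_rpow_lt (by exact_mod_cast hbn) (by exact_mod_cast hs)).1 hlt

lemma frequently_le_rpow_of_liminf_lt {s b : ℕ → ℕ} (hsb : ∀ n, s n ≤ b n)
    (hb : ∀ᶠ n in atTop, 1 < b n) {e : ℝ}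
    (h : liminf (fun n => Real.logb (b n) (s n)) atTop < e) :
    ∃ᶠ n in atTop, (s n : ℝ) ≤ b n ^ e := by
  refine ((frequently_lt_of_liminf_lt (isBoundedUnder_of ⟨1, fun n =>
    logb_natCast_le_one (hsb n)⟩).isCoboundedUnder_ge h).and_eventually hb).mono ?_
  rintro n ⟨hlt, hbn⟩
  rcases (s n).eq_zero_or_pos with h0 | hs
  · rw [h0, Nat.cast_zero]; positivity
  · exact (Real.logb_le_iff_le_rpow (by exact_mod_cast hbn) (by exact_mod_cast hs)).1 hlt.le

lemma inv_natCast_le_inv_natCast_rpow {s b : ℕ} {r : ℝ} (hr : 0 ≤ r) (h : (b : ℝ) ^ r ≤ s) :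
    (s : ℝ≥0∞)⁻¹ ≤ ((b : ℝ≥0∞)⁻¹) ^ r := by
  rw [ENNReal.inv_rpow, ENNReal.inv_le_inv, ← ENNReal.ofReal_natCast b,
    ENNReal.ofReal_rpow_of_nonneg (Nat.cast_nonneg _) hr, ← ENNReal.ofReal_natCast s]
  exact ENNReal.ofReal_le_ofReal h

lemma natCast_mul_inv_rpow_le {s b : ℕ} (hb : 0 < b) {d δ : ℝ}
    (h : (s : ℝ) ≤ (b : ℝ) ^ (d - δ)) : (s : ℝ≥0∞) * ((b : ℝ≥0∞)⁻¹) ^ d ≤ ((b : ℝ≥0∞)⁻¹) ^ δ := by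
  have hb0 : (b : ℝ≥0∞) ≠ 0 := by exact_mod_cast hb.ne'
  have hs : (s : ℝ≥0∞) ≤ (b : ℝ≥0∞) ^ (d - δ) := by
    rw [← ENNReal.ofReal_natCast b, ENNReal.ofReal_rpow_of_pos (by exact_mod_cast hb),
      ← ENNReal.ofReal_natCast s]
    exact ENNReal.ofReal_le_ofReal h
  calc (s : ℝ≥0∞) * ((b : ℝ≥0∞)⁻¹) ^ d ≤ (b : ℝ≥0∞) ^ (d - δ) * (b : ℝ≥0∞) ^ (-d) := by
        rw [ENNReal.inv_rpow, ← ENNReal.rpow_neg]; gcongr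
    _ = ((b : ℝ≥0∞)⁻¹) ^ δ := by
        rw [← ENNReal.rpow_add _ _ hb0 (ENNReal.natCast_ne_top b), ENNReal.inv_rpow,
          ← ENNReal.rpow_neg]
        ring_nf

lemma liminf_eq_zero_of_frequently_le {u v : ℕ → ℝ≥0∞} (huv : ∃ᶠ n in atTop, u n ≤ v n)
    (hv : Tendsto v atTop (𝓝 0)) : liminf u atTop = 0 :=
  nonpos_iff_eq_zero.1 <| le_of_forall_gt_imp_ge_of_dense fun ε hε =>
    liminf_le_of_frequently_le' <|
      (huv.and_eventually (ENNReal.tendsto_nhds_zero.1 hv ε hε)).mono fun _ hn => hn.1.trans hn.2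

/-- Choosing `a n = 1 / |T_n|`: a set of diameter `d` lies in a single cylinder of level `L`,
and that cylinder's weight `a L ^ r` exceeds `d ^ r` by at most `η`. -/
lemma exists_forall_lt_and_rpow_le {a : ℕ → ℝ≥0∞} (ha : StrictAnti a)
    (ha0 : Tendsto a atTop (𝓝 0)) {N : ℕ} {d : ℝ≥0∞} (hd : d ≤ a N) {η : ℝ≥0∞} (hη : 0 < η)
    {r : ℝ} (hr : 0 < r) : ∃ L, N ≤ L ∧ (∀ k < L, d < a k) ∧ a L ^ r ≤ d ^ r + η := by
  classical
  have hex : ∃ L, a L ^ r ≤ d ^ r + η :=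
    (((ENNReal.continuous_rpow_const.tendsto 0).comp ha0).eventually
      (ge_mem_nhds (by simpa [ENNReal.zero_rpow_of_pos hr] using hη.trans_le le_add_self))).exists
  refine ⟨max (Nat.find hex) N, le_max_right _ _, fun k hk => ?_, ?_⟩
  · rcases lt_or_ge k (Nat.find hex) with hkL | hkL
    · exact (ENNReal.rpow_lt_rpow_iff hr).1
        (le_self_add.trans_lt (not_le.1 (Nat.find_min hex hkL)))
    · exact hd.trans_lt (ha (by omega))
  · exact (ENNReal.rpow_le_rpow (ha.antitone (le_max_left _ _)) hr.le).trans (Nat.find_spec hex)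

end Exponents

section Dimension

variable {T S : Set (List ℕ)}

lemma strictAnti_inv_ncard_level (hT : IsTree T) (hTfin : FinBranching T)
    (hT2 : AtLeastTwo T) : StrictAnti fun n => ((level T n).ncard : ℝ≥0∞)⁻¹ := fun _ _ h => by
  simpa [ENNReal.inv_lt_inv] using strictMono_ncard_level hT hTfin hT2 h

lemma tendsto_inv_ncard_level (hT : IsTree T) (hTfin : FinBranching T)
    (hT2 : AtLeastTwo T) : Tendsto (fun n => ((level T n).ncard : ℝ≥0∞)⁻¹) atTop (𝓝 0) :=
  ENNReal.tendsto_inv_nat_nhds_zero.comp (strictMono_ncard_level hT hTfin hT2).tendsto_atTop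

lemma eventually_one_lt_ncard_level (hT : IsTree T) (hTfin : FinBranching T)
    (hT2 : AtLeastTwo T) : ∀ᶠ n in atTop, 1 < (level T n).ncard :=
  eventually_atTop.2 ⟨1, fun _ hn => one_lt_ncard_level hT hTfin hT2 hn⟩

variable {X : Type*} [MetricSpace X] {φ : (ℕ → ℕ) → X}

lemma hausdorffMeasure_image_paths_le [MeasurableSpace X] [BorelSpace X]
    (hφ : ∀ f ∈ paths T, ∀ g ∈ paths T, dist (φ f) (φ g) = treeDist T f g)
    (hT : IsTree T) (hTfin : FinBranching T) (hT2 : AtLeastTwo T) (hST : S ⊆ T)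
    {d : ℝ} (hd : 0 ≤ d) :
    μH[d] (φ '' paths S) ≤ liminf
      (fun n => ((level S n).ncard : ℝ≥0∞) * (((level T n).ncard : ℝ≥0∞)⁻¹) ^ d) atTop := by
  have hSfin (n : ℕ) : (level S n).Finite :=
    (level_finite hT hTfin n).subset (level_mono hST n)
  have hdiam (n : ℕ) (σ : (hSfin n).toFinset) :
      Metric.ediam (φ '' (paths S ∩ cylinder σ)) ≤ ((level T n).ncard : ℝ≥0∞)⁻¹ := by
    have hlen : (σ : List ℕ).length = n := ((hSfin n).mem_toFinset.1 σ.2).2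
    have hT_diam := ediam_image_cylinder_le hφ hT hTfin hT2 (σ : List ℕ)
    rw [hlen] at hT_diam
    exact (Metric.ediam_mono (Set.image_mono (Set.inter_subset_inter_left _
      (paths_mono hST)))).trans hT_diam
  have hcover (n : ℕ) :
      φ '' paths S ⊆ ⋃ σ : (hSfin n).toFinset, φ '' (paths S ∩ cylinder σ) := by
    rintro _ ⟨f, hf, rfl⟩
    exact Set.mem_iUnion.2 ⟨⟨seg f n, by simpa using seg_mem_level hf n⟩,
      f, ⟨hf, by simp [cylinder]⟩, rfl⟩
  refine (Measure.hausdorffMeasure_le_liminf_sum d _ _ (tendsto_inv_ncard_level hT hTfin hT2)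
    (fun n (σ : (hSfin n).toFinset) => φ '' (paths S ∩ cylinder σ))
    (Eventually.of_forall hdiam) (Eventually.of_forall hcover)).trans
    (liminf_le_liminf (Eventually.of_forall fun n => ?_))
  calc ∑ σ : (hSfin n).toFinset, Metric.ediam (φ '' (paths S ∩ cylinder σ)) ^ d
      ≤ ∑ _σ : (hSfin n).toFinset, (((level T n).ncard : ℝ≥0∞)⁻¹) ^ d :=
        Finset.sum_le_sum fun σ _ => ENNReal.rpow_le_rpow (hdiam n σ) hd
    _ = ((level S n).ncard : ℝ≥0∞) * (((level T n).ncard : ℝ≥0∞)⁻¹) ^ d := by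
        simp [Set.ncard_eq_toFinset_card _ (hSfin n)]

lemma dimH_image_paths_le
    (hφ : ∀ f ∈ paths T, ∀ g ∈ paths T, dist (φ f) (φ g) = treeDist T f g)
    (hT : IsTree T) (hTfin : FinBranching T) (hT2 : AtLeastTwo T) (hST : S ⊆ T) :
    dimH (φ '' paths S) ≤ ENNReal.ofReal
      (liminf (fun n => Real.logb ((level T n).ncard) ((level S n).ncard)) atTop) := by
  borelize X
  set α := liminf (fun n => Real.logb ((level T n).ncard) ((level S n).ncard)) atTop
  refine dimH_le fun d hd => le_of_not_gt fun hαd => ?_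
  rw [← ENNReal.ofReal_coe_nnreal, ENNReal.ofReal_lt_ofReal_iff'] at hαd
  obtain ⟨δ, hδ, hαδ⟩ : ∃ δ : ℝ, 0 < δ ∧ α < d - δ :=
    ⟨(d - α) / 2, by linarith, by linarith⟩
  have hfreq := frequently_le_rpow_of_liminf_lt (s := fun n => (level S n).ncard)
    (fun n => Set.ncard_le_ncard (level_mono hST n) (level_finite hT hTfin n))
    (eventually_one_lt_ncard_level hT hTfin hT2) hαδ
  have hzero : μH[d] (φ '' paths S) = 0 := nonpos_iff_eq_zero.1 <|
    (hausdorffMeasure_image_paths_le hφ hT hTfin hT2 hST d.2).trans_eq <|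
      liminf_eq_zero_of_frequently_le
        (hfreq.mono fun n hn => natCast_mul_inv_rpow_le
          (ncard_level_pos hT hT2.noLeaves (level_finite hT hTfin) n) hn)
        ((ENNReal.continuous_rpow_const.tendsto' 0 0 (ENNReal.zero_rpow_of_pos hδ)).comp
          (tendsto_inv_ncard_level hT hTfin hT2))
  exact ENNReal.zero_ne_top (hzero ▸ hd)

lemma exists_cylinder_of_ediam_le
    (hφ : ∀ f ∈ paths T, ∀ g ∈ paths T, dist (φ f) (φ g) = treeDist T f g)
    (hT : IsTree T) (hTfin : FinBranching T) (hT2 : AtLeastTwo T) (hST : S ⊆ T)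
    {r : ℝ} (hr : 0 < r) {N : ℕ}
    (hN : ∀ m ≥ N, ((level S m).ncard : ℝ≥0∞)⁻¹ ≤ (((level T m).ncard : ℝ≥0∞)⁻¹) ^ r)
    {t : Set X} (ht : Metric.ediam t ≤ ((level T N).ncard : ℝ≥0∞)⁻¹)
    {F : ℕ → ℕ} (hF : F ∈ paths S) (hFt : φ F ∈ t) {η : ℝ≥0∞} (hη : 0 < η) :
    ∃ L, (∀ f ∈ paths S, φ f ∈ t → f ∈ cylinder (seg F L)) ∧
      ((level S L).ncard : ℝ≥0∞)⁻¹ ≤ Metric.ediam t ^ r + η := by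
  obtain ⟨L, hNL, hlt, hle⟩ := exists_forall_lt_and_rpow_le
    (strictAnti_inv_ncard_level hT hTfin hT2) (tendsto_inv_ncard_level hT hTfin hT2) ht hη hr
  refine ⟨L, fun f hf hft => mem_cylinder_seg.2 fun i hi => ?_, (hN L hNL).trans hle⟩
  exact forall_le_eq_of_edist_lt hφ hT hTfin hT2 (paths_mono hST hf) (paths_mono hST hF)
    ((Metric.edist_le_ediam_of_mem hft hFt).trans_lt (hlt i hi)) i le_rfl

lemma one_le_hausdorffMeasure_image_paths [MeasurableSpace X] [BorelSpace X]
    (hφ : ∀ f ∈ paths T, ∀ g ∈ paths T, dist (φ f) (φ g) = treeDist T f g)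
    (hT : IsTree T) (hTfin : FinBranching T) (hT2 : AtLeastTwo T)
    (hST : S ⊆ T) (hS : IsTree S) (hSnl : NoLeaves S) (hSub : UnifBranching S)
    {r : ℝ} (hr : 0 < r)
    (hev : ∀ᶠ m in atTop,
      ((level S m).ncard : ℝ≥0∞)⁻¹ ≤ (((level T m).ncard : ℝ≥0∞)⁻¹) ^ r) :
    1 ≤ μH[r] (φ '' paths S) := by
  have hSfin (n : ℕ) : (level S n).Finite :=
    (level_finite hT hTfin n).subset (level_mono hST n)
  obtain ⟨N, hN⟩ := eventually_atTop.1 hev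
  rw [Measure.hausdorffMeasure_apply]
  refine le_iSup₂_of_le (((level T N).ncard : ℝ≥0∞)⁻¹) (ENNReal.inv_pos.2
    (ENNReal.natCast_ne_top _)) (le_iInf₂ fun t hcov => le_iInf fun hdiam => ?_)
  refine ENNReal.le_of_forall_pos_le_add fun ε hε _ => ?_
  obtain ⟨η, hη, hηε⟩ := ENNReal.exists_pos_sum_of_countable (ENNReal.coe_ne_zero.2 hε.ne') ℕ
  have hcyl (n : ℕ) (hn : (t n ∩ φ '' paths S).Nonempty) : ∃ F ∈ paths S, ∃ L,
      (∀ f ∈ paths S, φ f ∈ t n → f ∈ cylinder (seg F L)) ∧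
        ((level S L).ncard : ℝ≥0∞)⁻¹ ≤ Metric.ediam (t n) ^ r + η n := by
    obtain ⟨_, hx, F, hF, rfl⟩ := hn
    exact ⟨F, hF, exists_cylinder_of_ediam_le hφ hT hTfin hT2 hST hr hN (hdiam n) hF hx
      (by exact_mod_cast hη n)⟩
  choose! F hF L hL hw using hcyl
  set J := {n | (t n ∩ φ '' paths S).Nonempty}
  have hcovJ : paths S ⊆ ⋃ n ∈ J, cylinder (seg (F n) (L n)) := fun f hf => by
    obtain ⟨n, hn⟩ := Set.mem_iUnion.1 (hcov ⟨f, hf, rfl⟩)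
    have hJ : n ∈ J := ⟨_, hn, f, hf, rfl⟩
    exact Set.mem_iUnion₂.2 ⟨n, hJ, hL n hJ f hf hn⟩
  obtain ⟨I, hIJ, hIfin, hIcov⟩ :=
    (isCompact_paths hSfin).elim_finite_subcover_image (fun n _ => isOpen_cylinder _) hcovJ
  have hcount := one_le_sum_inv_ncard_of_paths_subset hS hSnl hSfin hSub hIfin.toFinset
    (fun n => seg (F n) (L n)) (fun n hn => hF n (hIJ (hIfin.mem_toFinset.1 hn)) (L n))
    (by simpa using hIcov)
  simp only [seg_length] at hcount
  calc 1 ≤ ∑ n ∈ hIfin.toFinset, ((level S (L n)).ncard : ℝ≥0∞)⁻¹ := hcount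
    _ ≤ ∑ n ∈ hIfin.toFinset, ((⨆ _ : (t n).Nonempty, Metric.ediam (t n) ^ r) + η n) :=
        Finset.sum_le_sum fun n hn => by
          have hJ := hIJ (hIfin.mem_toFinset.1 hn)
          exact (hw n hJ).trans (by gcongr; exact le_iSup_of_le hJ.left le_rfl)
    _ ≤ (∑' n, ⨆ _ : (t n).Nonempty, Metric.ediam (t n) ^ r) + ∑' n, (η n : ℝ≥0∞) := by
        rw [Finset.sum_add_distrib]
        exact add_le_add (ENNReal.sum_le_tsum _) (ENNReal.sum_le_tsum _)
    _ ≤ (∑' n, ⨆ _ : (t n).Nonempty, Metric.ediam (t n) ^ r) + ε := by gcongr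

lemma le_dimH_image_paths
    (hφ : ∀ f ∈ paths T, ∀ g ∈ paths T, dist (φ f) (φ g) = treeDist T f g)
    (hT : IsTree T) (hTfin : FinBranching T) (hT2 : AtLeastTwo T)
    (hST : S ⊆ T) (hS : IsTree S) (hSnl : NoLeaves S) (hSub : UnifBranching S) :
    ENNReal.ofReal (liminf (fun n => Real.logb ((level T n).ncard) ((level S n).ncard)) atTop) ≤
      dimH (φ '' paths S) := by
  borelize X
  refine ENNReal.le_of_forall_nnreal_lt fun r hr => ?_
  rcases eq_zero_or_pos r with rfl | hr0
  · simp
  rw [← ENNReal.ofReal_coe_nnreal, ENNReal.ofReal_lt_ofReal_iff'] at hr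
  have hev := (eventually_rpow_lt_of_lt_liminf (eventually_one_lt_ncard_level hT hTfin hT2)
    r.2 hr.1).mono fun n hn => inv_natCast_le_inv_natCast_rpow r.2 hn.le
  exact le_dimH_of_hausdorffMeasure_ne_zero (zero_lt_one.trans_le
    (one_le_hausdorffMeasure_image_paths hφ hT hTfin hT2 hST hS hSnl hSub hr0 hev)).ne'

end Dimension

/-- For a finitely branching tree `T` in which every node has at least two
successors and a level-wise uniformly branching subtree `S ⊆ T` without leaves, the Hausdorff
dimension of `[S]` in the ultrametric space `[T]` equals `liminf_n log|S_n| / log|T_n|`. -/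
theorem hausdorff_dim_of_unifBranching
    (T S : Set (List ℕ))
    (hT : IsTree T) (hTfin : FinBranching T) (hT2 : AtLeastTwo T)
    (hST : S ⊆ T) (hS : IsTree S) (hSnl : NoLeaves S) (hSub : UnifBranching S)
    {X : Type*} [MetricSpace X] (φ : (ℕ → ℕ) → X)
    (hφ : ∀ f ∈ paths T, ∀ g ∈ paths T, dist (φ f) (φ g) = treeDist T f g) :
    dimH (φ '' paths S) =
      ENNReal.ofReal (Filter.liminf
        (fun n : ℕ => Real.log ((level S n).ncard) / Real.log ((level T n).ncard))
        Filter.atTop) :=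
  le_antisymm (dimH_image_paths_le hφ hT hTfin hT2 hST)
    (le_dimH_image_paths hφ hT hTfin hT2 hST hS hSnl hSub)

end FractalTree
end

section
/- Let T = {0,1}* be the full binary tree. For a binary string σ let k_σ = min{ i : i = |σ| or σ_i = 1 }, and let S = { σ ∈ T : σ_r = 0 for every r with 2k_σ ≤ r < |σ| }. Then S is a subtree of T without leaves, the path set [S] is countable (hence its Hausdorff dimension in the ultrametric space [T] is 0), and for every n, 2^{n/2} ≤ |S_n| ≤ 2 · 2^{n/2}; consequently liminf_{n→∞} log|S_n|/log|T_n| = limsup_{n→∞} log|S_n|/log|T_n| = 1/2. -/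
/-!
Write `k = kval σ`. A string of `S` has the shape `0^k w 0^(n-2k)` with `|w| ≤ k`, and `w`
begins with `1` when `k < n`. So a path through `S` vanishes from twice the position of any of
its `1`s on, and `[S]` lies in the countable set of finitely supported sequences.

Put `K = ⌈n/2⌉`. The strings of `S_n` with `k ≥ K` are exactly `0^K β` for `β ∈ T_⌊n/2⌋`,
which gives `2^⌊n/2⌋ ≤ |S_n|`. A string with `k < K` is determined by `k` and `w`, and padding
`w` on the left with zeros to length `K - 1` keeps both, because the padded word has its first
`1` at position `K - 1 - k`. Hence `|S_n| ≤ 2^⌊n/2⌋ + 2^(K-1) ≤ 2 · 2^⌊n/2⌋`, and this pins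
`log|S_n| / log|T_n| = log₂|S_n| / n` to within `1/n` of `1/2`.
-/

open Filter MeasureTheory

namespace FractalTree

/-- The full binary tree `{0,1}*`, realized inside `ℕ*` as the strings with entries `≤ 1`. -/
def binT : Set (List ℕ) := {σ | ∀ x ∈ σ, x ≤ 1}

/-- `kval σ = min { i : i = |σ| ∨ σ_i = 1 }`. -/
noncomputable def kval (σ : List ℕ) : ℕ := sInf {i : ℕ | i = σ.length ∨ σ.getD i 0 = 1}

/-- The counterexample tree: strings `σ` that vanish at every position `r` with
`2 ⬝ kval σ ≤ r < |σ|`. -/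
noncomputable def exS : Set (List ℕ) :=
  {σ | σ ∈ binT ∧ ∀ r : ℕ, 2 * kval σ ≤ r → r < σ.length → σ.getD r 0 = 0}

open Topology

lemma kval_eq_findIdx (σ : List ℕ) : kval σ = σ.findIdx (· == 1) := by
  refine le_antisymm (Nat.sInf_le ?_) (le_csInf ⟨_, Or.inl rfl⟩ ?_)
  · rcases List.findIdx_le_length.lt_or_eq with h | h
    · right
      rw [List.getD_eq_getElem _ _ h]
      simpa using List.findIdx_getElem (w := h)
    · exact Or.inl h
  · rintro i (rfl | hi)
    · exact List.findIdx_le_length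
    · by_contra! hlt
      have hlen : i < σ.length := hlt.trans_le List.findIdx_le_length
      rw [List.getD_eq_getElem _ _ hlen] at hi
      simpa [hi] using List.not_of_lt_findIdx hlt

lemma kval_le_length (σ : List ℕ) : kval σ ≤ σ.length := by
  rw [kval_eq_findIdx]; exact List.findIdx_le_length

lemma kval_le_of_getD_eq_one {σ : List ℕ} {i : ℕ} (h : σ.getD i 0 = 1) : kval σ ≤ i :=
  Nat.sInf_le (Or.inr h)

lemma getD_kval_eq_one {σ : List ℕ} (h : kval σ < σ.length) : σ.getD (kval σ) 0 = 1 := by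
  rw [List.getD_eq_getElem _ _ h]
  simp only [kval_eq_findIdx] at h ⊢
  simpa using List.findIdx_getElem (w := h)

lemma kval_append_of_lt_length {l : List ℕ} (h : kval l < l.length) (l' : List ℕ) :
    kval (l ++ l') = kval l := by
  simp only [kval_eq_findIdx] at h ⊢
  rw [List.findIdx_append, if_pos h]

lemma kval_le_kval_append (l l' : List ℕ) : kval l ≤ kval (l ++ l') := by
  rcases (kval_le_length l).lt_or_eq with h | h
  · exact (kval_append_of_lt_length h l').ge
  · simp only [kval_eq_findIdx] at h ⊢
    rw [List.findIdx_append, if_neg h.not_lt]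
    omega

lemma kval_replicate_append (j : ℕ) (l : List ℕ) :
    kval (List.replicate j 0 ++ l) = j + kval l := by
  simp only [kval_eq_findIdx]
  rw [List.findIdx_append, if_neg (by simp [List.findIdx_eq_length.2]),
    List.length_replicate]
  omega

lemma take_eq_replicate_of_le_kval {σ : List ℕ} (hσ : σ ∈ binT) {K : ℕ}
    (hK : K ≤ kval σ) :
    σ.take K = List.replicate K 0 := by
  have hKσ := hK.trans (kval_le_length σ)
  refine List.ext_getElem (by simpa using hKσ) fun i hi _ => ?_
  have hik : i < σ.findIdx (· == 1) := by
    simp only [List.length_take, lt_inf_iff, kval_eq_findIdx] at hi hK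
    omega
  have h1 := hσ _ (σ.getElem_mem (hik.trans_le List.findIdx_le_length))
  have h2 := List.not_of_lt_findIdx hik
  simp only [List.getElem_take, List.getElem_replicate]
  simp only [beq_eq_false_iff_ne, ne_eq] at h2
  omega

lemma append_mem_binT {σ τ : List ℕ} (hσ : σ ∈ binT) (hτ : τ ∈ binT) :
    σ ++ τ ∈ binT :=
  List.forall_mem_append.2 ⟨hσ, hτ⟩

lemma replicate_zero_mem_binT (n : ℕ) : List.replicate n 0 ∈ binT := fun x hx => by
  simp [List.eq_of_mem_replicate hx]

lemma isTree_exS : IsTree exS := by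
  refine ⟨⟨[], by simp [exS, binT]⟩, fun σ ⟨hσb, hσ⟩ τ hτσ => ?_⟩
  refine ⟨fun x hx => hσb x (hτσ.subset hx), fun r hr hrτ => ?_⟩
  have hkτ : kval τ < τ.length := by omega
  obtain ⟨t, rfl⟩ := hτσ
  rw [← List.getD_append _ t _ _ hrτ]
  exact hσ r (by rwa [kval_append_of_lt_length hkτ]) (by rw [List.length_append]; omega)

lemma noLeaves_exS : NoLeaves exS := by
  refine fun σ ⟨hσb, hσ⟩ =>
    ⟨0, append_mem_binT hσb (by simp [binT]), fun r hr hrσ => ?_⟩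
  have hk := kval_le_kval_append σ [0]
  rcases (Nat.lt_succ_iff.1 (by simpa using hrσ)).lt_or_eq with h | rfl
  · rw [List.getD_append _ _ _ _ h]; exact hσ r (by omega) h
  · simp

lemma replicate_append_mem_exS {K : ℕ} {β : List ℕ} (hβ : β ∈ binT)
    (hlen : β.length ≤ K) :
    List.replicate K 0 ++ β ∈ exS := by
  refine ⟨append_mem_binT (replicate_zero_mem_binT K) hβ, fun r hr hrlen => ?_⟩
  rw [kval_replicate_append] at hr
  simp only [List.length_append, List.length_replicate] at hrlen
  omega

lemma getD_seg (f : ℕ → ℕ) {n i : ℕ} (hi : i < n) : (seg f n).getD i 0 = f i := by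
  simp [seg, List.getD_eq_getElem?_getD, hi]

lemma eq_zero_of_mem_paths_exS {f : ℕ → ℕ} (hf : f ∈ paths exS) {k r : ℕ} (hk : f k ≠ 0)
    (hkr : 2 * k ≤ r) : f r = 0 := by
  obtain ⟨hb, hz⟩ := hf (r + 1)
  have hk1 : (seg f (r + 1)).getD k 0 = 1 := by
    have : f k ≤ 1 := hb _ (List.mem_map.2 ⟨k, List.mem_range.2 (by omega), rfl⟩)
    rw [getD_seg f (by omega)]; omega
  rw [← getD_seg f (Nat.lt_succ_self r)]
  exact hz r (by have := kval_le_of_getD_eq_one hk1; omega) (by simp [seg])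

lemma finite_support_of_mem_paths_exS {f : ℕ → ℕ} (hf : f ∈ paths exS) :
    (Function.support f).Finite := by
  rcases (Function.support f).eq_empty_or_nonempty with h | ⟨k, hk⟩
  · simp [h]
  · refine (Set.finite_Iio (2 * k)).subset fun r hr => ?_
    by_contra hkr
    exact hr (eq_zero_of_mem_paths_exS hf hk (not_lt.1 hkr))

lemma countable_paths_exS : (paths exS).Countable :=
  (Set.countable_range ((⇑) : (ℕ →₀ ℕ) → ℕ → ℕ)).mono fun f hf =>
    Set.mem_range.2 ⟨Finsupp.ofSupportFinite f (finite_support_of_mem_paths_exS hf), rfl⟩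

lemma level_binT_eq_range (n : ℕ) :
    level binT n = Set.range fun b : Fin n → Fin 2 => List.ofFn fun i => (b i : ℕ) := by
  ext σ
  constructor
  · rintro ⟨hσ, rfl⟩
    refine ⟨fun i => ⟨σ[i], Nat.lt_succ_of_le (hσ _ (List.getElem_mem _))⟩, ?_⟩
    exact List.ext_getElem (by simp) fun i _ _ => by simp
  · rintro ⟨b, rfl⟩
    refine ⟨fun x hx => ?_, by simp⟩
    obtain ⟨i, rfl⟩ := List.mem_ofFn.1 hx
    exact Nat.le_of_lt_succ (b i).isLt

lemma finite_level_binT (n : ℕ) : (level binT n).Finite := by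
  rw [level_binT_eq_range]; exact Set.finite_range _

lemma ncard_level_binT (n : ℕ) : (level binT n).ncard = 2 ^ n := by
  have hinj : Function.Injective fun b : Fin n → Fin 2 => List.ofFn fun i => (b i : ℕ) :=
    fun b c h => funext fun i => Fin.ext (congrFun (List.ofFn_injective h) i)
  rw [level_binT_eq_range, Set.ncard_range_of_injective hinj]
  simp

lemma finite_level_exS (n : ℕ) : (level exS n).Finite :=
  (finite_level_binT n).subset fun _ ⟨hσ, hn⟩ => ⟨hσ.1, hn⟩

lemma pow_half_le_ncard_level_exS (n : ℕ) : 2 ^ (n / 2) ≤ (level exS n).ncard := by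
  rw [← ncard_level_binT]
  refine Set.ncard_le_ncard_of_injOn (List.replicate (n - n / 2) 0 ++ ·) ?_
    (fun _ _ _ _ h => List.append_cancel_left h) (finite_level_exS n)
  rintro β ⟨hβ, hlen⟩
  refine ⟨replicate_append_mem_exS hβ (by omega), ?_⟩
  rw [List.length_append, List.length_replicate]
  omega

lemma kval_pos_of_mem_exS {σ : List ℕ} (hσ : σ ∈ exS) (hne : σ ≠ []) : 0 < kval σ := by
  have hlen := List.length_pos_iff.2 hne
  refine Nat.pos_of_ne_zero fun h0 => ?_
  have h1 := getD_kval_eq_one (h0 ▸ hlen)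
  have h2 := hσ.2 0 (by omega) hlen
  rw [h0] at h1
  omega

lemma eq_replicate_append_of_mem_exS {σ : List ℕ} (hσ : σ ∈ exS) :
    σ = List.replicate (kval σ) 0 ++ (σ.drop (kval σ)).take (kval σ) ++
      List.replicate (σ.length - 2 * kval σ) 0 := by
  set k := kval σ
  have htail : (σ.drop k).drop k = List.replicate (σ.length - 2 * k) 0 := by
    rw [List.drop_drop, List.eq_replicate_iff]
    refine ⟨by rw [List.length_drop]; omega, fun b hb => ?_⟩
    obtain ⟨i, hi, rfl⟩ := List.getElem_of_mem hb
    have hi' : k + k + i < σ.length := by rw [List.length_drop] at hi; omega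
    have := hσ.2 (k + k + i) (by omega) hi'
    rwa [List.getD_eq_getElem _ _ hi', ← List.getElem_drop] at this
  calc σ = σ.take k ++ (σ.drop k).take k ++ (σ.drop k).drop k := by
        rw [List.append_assoc, List.take_append_drop, List.take_append_drop]
    _ = _ := by rw [take_eq_replicate_of_le_kval hσ.1 le_rfl, htail]

lemma ncard_level_exS_inter_le (n : ℕ) :
    (level exS n ∩ {σ | n - n / 2 ≤ kval σ}).ncard ≤ 2 ^ (n / 2) := by
  rw [← ncard_level_binT]
  refine Set.ncard_le_ncard_of_injOn (List.drop (n - n / 2)) ?_ ?_ (finite_level_binT _)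
  · rintro σ ⟨⟨hσ, hlen⟩, -⟩
    refine ⟨fun x hx => hσ.1 x ((List.drop_sublist _ σ).subset hx), ?_⟩
    rw [List.length_drop, hlen]
    omega
  · rintro σ ⟨⟨hσ, -⟩, hkσ⟩ τ ⟨⟨hτ, -⟩, hkτ⟩ h
    rw [← List.take_append_drop (n - n / 2) σ, ← List.take_append_drop (n - n / 2) τ,
      take_eq_replicate_of_le_kval hσ.1 hkσ, take_eq_replicate_of_le_kval hτ.1 hkτ]
    exact congrArg _ h

lemma ncard_level_exS_diff_le (n : ℕ) :
    (level exS n \ {σ | n - n / 2 ≤ kval σ}).ncard ≤ 2 ^ (n - n / 2 - 1) := by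
  rw [← ncard_level_binT]
  set K := n - n / 2
  let pad : List ℕ → List ℕ := fun σ =>
    List.replicate (K - 1 - kval σ) 0 ++ (σ.drop (kval σ)).take (kval σ)
  have kval_pad : ∀ σ ∈ level exS n \ {σ | K ≤ kval σ},
      kval (pad σ) = K - 1 - kval σ := by
    rintro σ ⟨⟨hσ, hlen⟩, hk⟩
    simp only [Set.mem_ofPred_eq, not_le] at hk
    have hpos := kval_pos_of_mem_exS hσ (by rintro rfl; rw [List.length_nil] at hlen; omega)
    have hwin : ((σ.drop (kval σ)).take (kval σ)).getD 0 0 = 1 := by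
      rw [← getD_kval_eq_one (σ := σ) (by omega)]
      simp [List.getD_eq_getElem?_getD, hpos]
    rw [kval_replicate_append, Nat.le_zero.1 (kval_le_of_getD_eq_one hwin), add_zero]
  refine Set.ncard_le_ncard_of_injOn pad ?_ ?_ (finite_level_binT _)
  · rintro σ ⟨⟨hσ, hlen⟩, hk⟩
    simp only [Set.mem_ofPred_eq, not_le] at hk
    refine ⟨append_mem_binT (replicate_zero_mem_binT _) fun x hx => hσ.1 x ?_, ?_⟩
    · exact (List.drop_sublist _ σ).subset ((List.take_sublist _ _).subset hx)
    · simp only [pad, List.length_append, List.length_replicate, List.length_take,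
        List.length_drop, hlen]
      omega
  · intro σ hσ τ hτ h
    have hk : kval σ = kval τ := by
      have := congrArg kval h
      rw [kval_pad σ hσ, kval_pad τ hτ] at this
      simp only [Set.mem_sdiff, Set.mem_ofPred_eq, not_le] at hσ hτ
      omega
    simp only [pad, hk] at h
    calc σ = _ := eq_replicate_append_of_mem_exS hσ.1.1
      _ = _ := by rw [hk, hσ.1.2, List.append_cancel_left h]
      _ = τ := by rw [← hτ.1.2]; exact (eq_replicate_append_of_mem_exS hτ.1.1).symm

lemma ncard_level_exS_le (n : ℕ) : (level exS n).ncard ≤ 2 * 2 ^ (n / 2) := by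
  have hsplit := Set.ncard_inter_add_ncard_sdiff_eq_ncard (level exS n)
    {σ | n - n / 2 ≤ kval σ} (finite_level_exS n)
  have hK : 2 ^ (n - n / 2 - 1) ≤ 2 ^ (n / 2) := Nat.pow_le_pow_right two_pos (by omega)
  have := ncard_level_exS_inter_le n
  have := ncard_level_exS_diff_le n
  omega

lemma tendsto_log_div_log_two_pow {a : ℕ → ℝ}
    (ha : ∀ n, 2 ^ (n / 2) ≤ a n ∧ a n ≤ 2 * 2 ^ (n / 2)) :
    Tendsto (fun n => Real.log (a n) / Real.log (2 ^ n)) atTop (𝓝 (1 / 2)) := by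
  have hdev : ∀ n : ℕ, |Real.logb 2 (a n) - n / 2| ≤ 1 := fun n => by
    have hpos : (0 : ℝ) < 2 ^ (n / 2) := by positivity
    have hlo := Real.logb_le_logb_of_le one_lt_two hpos (ha n).1
    have hhi := Real.logb_le_logb_of_le one_lt_two (hpos.trans_le (ha n).1) (ha n).2
    rw [Real.logb_mul two_ne_zero hpos.ne', Real.logb_pow,
      Real.logb_self_eq_one one_lt_two] at hhi
    rw [Real.logb_pow, Real.logb_self_eq_one one_lt_two] at hlo
    have hfloor : n ≤ 2 * (n / 2) + 1 ∧ 2 * (n / 2) ≤ n := by omega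
    obtain ⟨h1, h2⟩ := And.imp (Nat.cast_le (α := ℝ)).2 (Nat.cast_le (α := ℝ)).2 hfloor
    push_cast at h1 h2
    rw [abs_le]; constructor <;> linarith
  have hdecomp : (fun n : ℕ => 1 / 2 + (Real.logb 2 (a n) - n / 2) / n) =ᶠ[atTop]
      fun n => Real.log (a n) / Real.log (2 ^ n) := by
    filter_upwards [eventually_gt_atTop 0] with n hn
    have : (n : ℝ) ≠ 0 := by positivity
    rw [Real.log_pow, Real.logb]
    field_simp
    ring
  refine Tendsto.congr' hdecomp ?_
  conv => rhs; rw [← add_zero (1 / 2 : ℝ)]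
  refine tendsto_const_nhds.add (squeeze_zero_norm' (a := fun n : ℕ => 1 / (n : ℝ)) ?_
    tendsto_one_div_atTop_nhds_zero_nat)
  filter_upwards with n
  rw [Real.norm_eq_abs, abs_div, Nat.abs_cast]
  exact div_le_div_of_nonneg_right (hdev n) (Nat.cast_nonneg n)

theorem countable_positive_boxDim_general
    {X : Type*} [MetricSpace X] (φ : (ℕ → ℕ) → X) :
    exS ⊆ binT ∧ IsTree exS ∧ NoLeaves exS ∧
    (paths exS).Countable ∧
    dimH (φ '' paths exS) = 0 ∧
    (∀ n : ℕ, 2 ^ (n / 2) ≤ (level exS n).ncard ∧ (level exS n).ncard ≤ 2 * 2 ^ (n / 2)) ∧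
    Filter.liminf
      (fun n : ℕ => Real.log ((level exS n).ncard) / Real.log ((level binT n).ncard))
      Filter.atTop = 1 / 2 ∧
    Filter.limsup
      (fun n : ℕ => Real.log ((level exS n).ncard) / Real.log ((level binT n).ncard))
      Filter.atTop = 1 / 2 := by
  have hbounds (n : ℕ) := And.intro (pow_half_le_ncard_level_exS n) (ncard_level_exS_le n)
  have hlim : Tendsto
      (fun n : ℕ => Real.log ((level exS n).ncard) / Real.log ((level binT n).ncard))
      atTop (𝓝 (1 / 2)) := by
    simpa only [ncard_level_binT, Nat.cast_pow, Nat.cast_ofNat] using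
      tendsto_log_div_log_two_pow fun n =>
        (hbounds n).imp (by exact_mod_cast ·) (by exact_mod_cast ·)
  exact ⟨fun _ hσ => hσ.1, isTree_exS, noLeaves_exS, countable_paths_exS,
    countable_paths_exS.image φ |>.dimH_zero, hbounds, hlim.liminf_eq, hlim.limsup_eq⟩

/-- `exS` is a subtree of the full binary tree without leaves, its path set
is countable (hence of Hausdorff dimension `0`), its levels satisfy
`2^{n/2} ≤ |exS_n| ≤ 2 ⬝ 2^{n/2}`, and consequently
`liminf_n log|S_n|/log|T_n| = limsup_n log|S_n|/log|T_n| = 1/2`. -/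
theorem countable_positive_boxDim
    {X : Type*} [MetricSpace X] (φ : (ℕ → ℕ) → X)
    (hφ : ∀ f ∈ paths binT, ∀ g ∈ paths binT, dist (φ f) (φ g) = treeDist binT f g) :
    exS ⊆ binT ∧ IsTree exS ∧ NoLeaves exS ∧
    (paths exS).Countable ∧
    dimH (φ '' paths exS) = 0 ∧
    (∀ n : ℕ, 2 ^ (n / 2) ≤ (level exS n).ncard ∧ (level exS n).ncard ≤ 2 * 2 ^ (n / 2)) ∧
    Filter.liminf
      (fun n : ℕ => Real.log ((level exS n).ncard) / Real.log ((level binT n).ncard))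
      Filter.atTop = 1 / 2 ∧
    Filter.limsup
      (fun n : ℕ => Real.log ((level exS n).ncard) / Real.log ((level binT n).ncard))
      Filter.atTop = 1 / 2 :=
  countable_positive_boxDim_general φ

end FractalTree
end

section
/- Let E be the Cantor group, the set of all sequences x : ℕ → ℤ/2ℤ under pointwise addition, equipped with the ultrametric d(x,y) = 2^{-n} for distinct x,y, where n is the least index with x(n) ≠ y(n). For R ⊆ ℕ, let U_R = { x ∈ E : x(n) = 0 for all n ∉ R }, a closed subgroup of E. Then the Hausdorff dimension of U_R equals the lower asymptotic density of R, i.e. dim_H(U_R) = liminf_{n→∞} |R ∩ {0,…,n−1}| / n. -/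
/-!
Upper bound: for every `n`, `U_R` is covered by `2 ^ |R ∩ [0, n)|` cylinders of diameter
`2⁻ⁿ`, so at the infinitely many scales where `|R ∩ [0, n)| ≤ d n` the `d`-dimensional
Hausdorff sums are at most `1`, and `μH[d] U_R < ∞`.

Lower bound: if `|R ∩ [0, n)| ≥ r n - K` for all `n`, read the digits of `x ∈ U_R` at the
positions of `R` as a binary expansion. Points at distance `2⁻ⁿ` give expansions agreeing in
their first `|R ∩ [0, n)|` digits, so this map `U_R → ℝ` is `r`-Hölder. As `R` is infinite,
it is onto `[0, 1]`, whence `1 = dimH [0, 1] ≤ dimH U_R / r`.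
-/

open Filter MeasureTheory

namespace CantorGroup

open Classical in
/-- The ultrametric on the Cantor group `E = (ℕ → ℤ/2ℤ)`: `d(x,x) = 0` and, for `x ≠ y`,
`d(x,y) = 2^{-n}` where `n` is the least index with `x n ≠ y n`. -/
noncomputable def cantorDist (x y : ℕ → ZMod 2) : ℝ :=
  if h : ∃ n, x n ≠ y n then (2 : ℝ)⁻¹ ^ Nat.find h else 0

/-- The closed subgroup `U_R = { x ∈ E : x n = 0 for all n ∉ R }`. -/
def UR (R : Set ℕ) : Set (ℕ → ZMod 2) := {x | ∀ n : ℕ, n ∉ R → x n = 0}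

open scoped ENNReal NNReal Topology

lemma cantorDist_le_of_eqOn {x y : ℕ → ZMod 2} {n : ℕ} (h : ∀ i < n, x i = y i) :
    cantorDist x y ≤ (2 : ℝ)⁻¹ ^ n := by
  unfold cantorDist
  split_ifs with hne
  · exact pow_le_pow_of_le_one (by norm_num) (by norm_num) <|
      not_lt.1 fun hlt => Nat.find_spec hne (h _ hlt)
  · positivity

lemma cantorDist_self (x : ℕ → ZMod 2) : cantorDist x x = 0 := by
  simp [cantorDist]

lemma exists_cantorDist_eq_of_ne {x y : ℕ → ZMod 2} (hxy : x ≠ y) :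
    ∃ n, (∀ i < n, x i = y i) ∧ cantorDist x y = (2 : ℝ)⁻¹ ^ n := by
  classical
  have hne : ∃ n, x n ≠ y n := Function.ne_iff.1 hxy
  refine ⟨Nat.find hne, fun i hi => not_not.1 (Nat.find_min hne hi), ?_⟩
  rw [cantorDist, dif_pos hne]

lemma injective_of_dist_eq_cantorDist {X : Type*} [MetricSpace X] {φ : (ℕ → ZMod 2) → X}
    (hφ : ∀ x y, dist (φ x) (φ y) = cantorDist x y) : Function.Injective φ := by
  intro x y hxy
  by_contra hne
  obtain ⟨n, -, hn⟩ := exists_cantorDist_eq_of_ne hne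
  have : dist (φ x) (φ y) = 0 := by rw [hxy, dist_self]
  rw [hφ, hn] at this
  exact pow_ne_zero n (by norm_num) this

lemma ncard_inter_Iio_eq_count (R : Set ℕ) [DecidablePred (· ∈ R)] (n : ℕ) :
    (R ∩ Set.Iio n).ncard = Nat.count (· ∈ R) n := by
  rw [Nat.count_eq_card_filter_range, ← Set.ncard_coe_finset]
  congr 1
  ext i
  simp [and_comm]

theorem dimH_le_of_frequently_card_mul_le {X : Type*} [EMetricSpace X] {s : Set X}
    {ι : ℕ → Type*} [∀ n, Fintype (ι n)] {d : ℝ≥0} (δ : ℕ → ℝ≥0∞)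
    (hδ : Tendsto δ atTop (𝓝 0)) (t : ∀ n, ι n → Set X)
    (ht : ∀ n i, Metric.ediam (t n i) ≤ δ n) (hst : ∀ n, s ⊆ ⋃ i, t n i)
    (h : ∃ᶠ n in atTop, Fintype.card (ι n) * δ n ^ (d : ℝ) ≤ 1) :
    dimH s ≤ d := by
  borelize X
  refine dimH_le_of_hausdorffMeasure_ne_top (ne_top_of_le_ne_top ENNReal.one_ne_top ?_)
  refine (Measure.hausdorffMeasure_le_liminf_sum _ s δ hδ t (.of_forall ht)
    (.of_forall hst)).trans ?_
  refine liminf_le_of_frequently_le' (h.mono fun n hn => le_trans ?_ hn)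
  calc ∑ i, Metric.ediam (t n i) ^ (d : ℝ) ≤ ∑ _i : ι n, δ n ^ (d : ℝ) :=
        Finset.sum_le_sum fun i _ => ENNReal.rpow_le_rpow (ht n i) d.2
    _ = Fintype.card (ι n) * δ n ^ (d : ℝ) := by simp

lemma two_pow_mul_inv_two_pow_rpow_le_one {c n : ℕ} {d : ℝ≥0} (h : (c : ℝ) ≤ d * n) :
    (2 : ℝ≥0∞) ^ c * ((2 : ℝ≥0∞)⁻¹ ^ n) ^ (d : ℝ) ≤ 1 := by
  rw [← ENNReal.inv_pow, ENNReal.inv_rpow, ← div_eq_mul_inv,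
    ENNReal.div_le_iff (by positivity) (by simp), one_mul, ← ENNReal.rpow_natCast,
    ← ENNReal.rpow_natCast, ← ENNReal.rpow_mul]
  exact ENNReal.rpow_le_rpow_of_exponent_le one_le_two (by rw [mul_comm]; exact h)

theorem dimH_image_UR_le {X : Type*} [MetricSpace X] {φ : (ℕ → ZMod 2) → X}
    (hφ : ∀ x y, dist (φ x) (φ y) = cantorDist x y) (R : Set ℕ) [DecidablePred (· ∈ R)]
    {d : ℝ≥0} (hd : ∃ᶠ n in atTop, (Nat.count (· ∈ R) n : ℝ) ≤ d * n) :
    dimH (φ '' UR R) ≤ d := by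
  let S (n : ℕ) : Finset ℕ := (Finset.range n).filter (· ∈ R)
  let t (n : ℕ) (b : S n → ZMod 2) : Set X := φ '' {x ∈ UR R | ∀ i : S n, x i = b i}
  refine dimH_le_of_frequently_card_mul_le (fun n => 2⁻¹ ^ n)
    (ENNReal.tendsto_pow_atTop_nhds_zero_of_lt_one (by norm_num)) t ?_ ?_ ?_
  · rintro n b
    refine Metric.ediam_le ?_
    rintro _ ⟨x, ⟨hxR, hxb⟩, rfl⟩ _ ⟨y, ⟨hyR, hyb⟩, rfl⟩
    have hxy : ∀ i < n, x i = y i := fun i hi => by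
      by_cases hiR : i ∈ R
      · have hiS : i ∈ S n := Finset.mem_filter.2 ⟨Finset.mem_range.2 hi, hiR⟩
        rw [hxb ⟨i, hiS⟩, hyb ⟨i, hiS⟩]
      · rw [hxR i hiR, hyR i hiR]
    rw [edist_dist, hφ]
    calc ENNReal.ofReal (cantorDist x y) ≤ ENNReal.ofReal ((2 : ℝ)⁻¹ ^ n) :=
          ENNReal.ofReal_le_ofReal (cantorDist_le_of_eqOn hxy)
      _ = 2⁻¹ ^ n := by simp [ENNReal.ofReal_pow, ENNReal.inv_pow]
  · rintro n _ ⟨x, hx, rfl⟩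
    exact Set.mem_iUnion.2 ⟨fun i => x i, x, ⟨hx, fun _ => rfl⟩, rfl⟩
  · refine hd.mono fun n hn => ?_
    have hcard : Fintype.card (S n → ZMod 2) = 2 ^ Nat.count (· ∈ R) n := by
      simp [S, Nat.count_eq_card_filter_range, ZMod.card]
    rw [hcard, Nat.cast_pow, Nat.cast_ofNat]
    exact two_pow_mul_inv_two_pow_rpow_le_one hn

-- Naming this keeps the defeq `ZMod 2 = Fin 2` that `Real.ofDigits` needs out of later rewrites.
noncomputable def binaryValue (x : ℕ → ZMod 2) : ℝ := Real.ofDigits (b := 2) x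

lemma abs_binaryValue_sub_le {x y : ℕ → ZMod 2} {n : ℕ} (h : ∀ i < n, x i = y i) :
    |binaryValue x - binaryValue y| ≤ ((2 : ℝ) ^ n)⁻¹ := by
  simpa [binaryValue] using Real.abs_ofDigits_sub_ofDigits_le (b := 2) h

lemma surjOn_binaryValue : Set.SurjOn binaryValue Set.univ (Set.Icc 0 1) :=
  Real.ofDigits_SurjOn one_lt_two

noncomputable def compress (R : Set ℕ) (x : ℕ → ZMod 2) : ℕ → ZMod 2 :=
  fun k => x (Nat.nth (· ∈ R) k)

lemma compress_eqOn_of_eqOn {R : Set ℕ} [DecidablePred (· ∈ R)] {x y : ℕ → ZMod 2}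
    {n : ℕ} (h : ∀ i < n, x i = y i) :
    ∀ k < Nat.count (· ∈ R) n, compress R x k = compress R y k :=
  fun _ hk => h _ (Nat.nth_lt_of_lt_count hk)

lemma surjOn_compress {R : Set ℕ} (hR : R.Infinite) :
    Set.SurjOn (compress R) (UR R) Set.univ := by
  classical
  intro y _
  refine ⟨fun i => if i ∈ R then y (Nat.count (· ∈ R) i) else 0, fun i hi => if_neg hi, ?_⟩
  funext k
  simp [compress, Nat.nth_mem_of_infinite (p := (· ∈ R)) hR k,
    Nat.count_nth_of_infinite (p := (· ∈ R)) hR k]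

lemma infinite_of_forall_sub_le_count {R : Set ℕ} [DecidablePred (· ∈ R)] {r K : ℝ}
    (hr : 0 < r) (hK : ∀ n : ℕ, r * n - K ≤ Nat.count (· ∈ R) n) : R.Infinite := by
  intro hfin
  obtain ⟨n, hn⟩ := exists_nat_gt ((hfin.toFinset.card + K) / r)
  have := (hK n).trans (Nat.cast_le.2 (Nat.count_le_card (p := (· ∈ R)) hfin n))
  rw [div_lt_iff₀ hr] at hn
  linarith

lemma inv_two_pow_le_of_sub_le {c n : ℕ} {r K : ℝ} (h : r * n - K ≤ c) :
    ((2 : ℝ) ^ c)⁻¹ ≤ 2 ^ K * ((2 : ℝ)⁻¹ ^ n) ^ r := by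
  have h2 : (0 : ℝ) ≤ 2 := zero_le_two
  rw [← inv_pow, ← Real.rpow_natCast, ← Real.rpow_natCast,
    ← Real.rpow_mul (inv_nonneg.2 h2), Real.inv_rpow h2, Real.inv_rpow h2, ← Real.rpow_neg h2,
    ← Real.rpow_neg h2, ← Real.rpow_add zero_lt_two]
  exact Real.rpow_le_rpow_of_exponent_le one_le_two (by linarith)

lemma dist_binaryValue_compress_le {R : Set ℕ} [DecidablePred (· ∈ R)] {r K : ℝ}
    (hK : ∀ n : ℕ, r * n - K ≤ Nat.count (· ∈ R) n) (x y : ℕ → ZMod 2) :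
    dist (binaryValue (compress R x)) (binaryValue (compress R y)) ≤
      2 ^ K * cantorDist x y ^ r := by
  obtain rfl | hxy := eq_or_ne x y
  · rw [dist_self, cantorDist_self]
    positivity
  obtain ⟨n, hxy, hn⟩ := exists_cantorDist_eq_of_ne hxy
  rw [Real.dist_eq, hn]
  exact (abs_binaryValue_sub_le (compress_eqOn_of_eqOn (R := R) hxy)).trans
    (by exact_mod_cast inv_two_pow_le_of_sub_le (hK n))

lemma holderOnWith_binaryValue_compress {X : Type*} [MetricSpace X] {φ : (ℕ → ZMod 2) → X}
    (hφ : ∀ x y, dist (φ x) (φ y) = cantorDist x y) {R : Set ℕ} [DecidablePred (· ∈ R)]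
    {r : ℝ≥0} {K : ℝ} (hK : ∀ n : ℕ, r * n - K ≤ Nat.count (· ∈ R) n) :
    HolderOnWith ((2 : ℝ≥0) ^ K) r
      (fun u => binaryValue (compress R (Function.invFun φ u))) (Set.range φ) := by
  rintro _ ⟨x, rfl⟩ _ ⟨y, rfl⟩
  have hinv := Function.leftInverse_invFun (injective_of_dist_eq_cantorDist hφ)
  dsimp only
  rw [hinv, hinv, edist_dist, edist_dist, ENNReal.ofReal_rpow_of_nonneg dist_nonneg r.coe_nonneg,
    hφ, ← ENNReal.ofReal_coe_nnreal, ← ENNReal.ofReal_mul (by positivity), NNReal.coe_rpow]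
  exact ENNReal.ofReal_le_ofReal (dist_binaryValue_compress_le hK x y)

theorem le_dimH_image_UR {X : Type*} [MetricSpace X] {φ : (ℕ → ZMod 2) → X}
    (hφ : ∀ x y, dist (φ x) (φ y) = cantorDist x y) (R : Set ℕ) [DecidablePred (· ∈ R)]
    {r : ℝ≥0} (hr : 0 < r) {K : ℝ} (hK : ∀ n : ℕ, r * n - K ≤ Nat.count (· ∈ R) n) :
    (r : ℝ≥0∞) ≤ dimH (φ '' UR R) := by
  set F : X → ℝ := fun u => binaryValue (compress R (Function.invFun φ u))
  have hF : Set.Icc 0 1 ⊆ F '' (φ '' UR R) := by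
    intro t ht
    obtain ⟨y, -, rfl⟩ := surjOn_binaryValue ht
    obtain ⟨x, hx, hxy⟩ :=
      surjOn_compress (infinite_of_forall_sub_le_count hr hK) (Set.mem_univ y)
    refine ⟨φ x, ⟨x, hx, rfl⟩, ?_⟩
    simp [F, Function.leftInverse_invFun (injective_of_dist_eq_cantorDist hφ) x, hxy]
  have hIcc : dimH (Set.Icc (0 : ℝ) 1) = 1 := by
    rw [Real.dimH_of_nonempty_interior] <;> simp
  have hHolder := (holderOnWith_binaryValue_compress hφ hK).mono (Set.image_subset_range φ (UR R))
  have := (dimH_mono hF).trans (hHolder.dimH_image_le hr)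
  rwa [hIcc, ENNReal.le_div_iff_mul_le (by simp [hr.ne']) (by simp), one_mul] at this

lemma frequently_le_mul_of_liminf_lt {c : ℕ → ℕ} (hc : ∀ n, c n ≤ n) {d : ℝ}
    (h : liminf (fun n => (c n : ℝ) / n) atTop < d) :
    ∃ᶠ n in atTop, (c n : ℝ) ≤ d * n := by
  have hbdd : IsBoundedUnder (· ≤ ·) atTop fun n => (c n : ℝ) / n :=
    isBoundedUnder_of ⟨1, fun n => div_le_one_of_le₀ (by exact_mod_cast hc n) n.cast_nonneg⟩
  refine ((frequently_lt_of_liminf_lt hbdd.isCoboundedUnder_ge h).and_eventually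
    (eventually_gt_atTop 0)).mono fun n ⟨hlt, hn⟩ => ?_
  exact ((div_lt_iff₀ (by positivity)).1 hlt).le

lemma exists_sub_le_of_lt_liminf {c : ℕ → ℕ} {r : ℝ} (hr : 0 ≤ r)
    (h : r < liminf (fun n => (c n : ℝ) / n) atTop) : ∃ K, ∀ n : ℕ, r * n - K ≤ c n := by
  have hbdd : IsBoundedUnder (· ≥ ·) atTop fun n => (c n : ℝ) / n :=
    isBoundedUnder_of ⟨0, fun n => by positivity⟩
  obtain ⟨N, hN⟩ := eventually_atTop.1 ((eventually_lt_of_lt_liminf h hbdd).and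
    (eventually_gt_atTop 0))
  refine ⟨r * N, fun n => ?_⟩
  rcases le_or_gt N n with hNn | hnN
  · have := (lt_div_iff₀ (by exact_mod_cast (hN n hNn).2)).1 (hN n hNn).1
    nlinarith
  · have : r * n ≤ r * N := mul_le_mul_of_nonneg_left (by exact_mod_cast hnN.le) hr
    linarith [(c n).cast_nonneg (α := ℝ)]

theorem dimH_UR_eq_lower_density_general
    {X : Type*} [MetricSpace X] (φ : (ℕ → ZMod 2) → X)
    (hdist : ∀ x y : ℕ → ZMod 2, dist (φ x) (φ y) = cantorDist x y)
    (R : Set ℕ) :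
    dimH (φ '' UR R) =
      ENNReal.ofReal (Filter.liminf
        (fun n : ℕ => ((R ∩ Set.Iio n).ncard : ℝ) / (n : ℝ)) Filter.atTop) := by
  classical
  simp_rw [ncard_inter_Iio_eq_count]
  apply le_antisymm
  · refine le_of_forall_gt_imp_ge_of_dense fun d hd => ?_
    obtain ⟨d', hd', hd'd⟩ := ENNReal.lt_iff_exists_nnreal_btwn.1 hd
    rw [← ENNReal.ofReal_coe_nnreal, ENNReal.ofReal_lt_ofReal_iff'] at hd'
    exact (dimH_image_UR_le hdist R
      (frequently_le_mul_of_liminf_lt (fun n => Nat.count_le _) hd'.1)).trans hd'd.le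
  · refine ENNReal.le_of_forall_pos_nnreal_lt fun r hr hrL => ?_
    rw [← ENNReal.ofReal_coe_nnreal, ENNReal.ofReal_lt_ofReal_iff'] at hrL
    obtain ⟨K, hK⟩ := exists_sub_le_of_lt_liminf r.coe_nonneg hrL.1
    exact le_dimH_image_UR hdist R hr hK

/-- In the Cantor group `E`, the Hausdorff dimension of the closed subgroup
`U_R` equals the lower asymptotic density of `R`. -/
theorem dimH_UR_eq_lower_density
    {X : Type*} [MetricSpace X] (φ : (ℕ → ZMod 2) → X)
    (hbij : Function.Bijective φ)
    (hdist : ∀ x y : ℕ → ZMod 2, dist (φ x) (φ y) = cantorDist x y)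
    (R : Set ℕ) :
    dimH (φ '' UR R) =
      ENNReal.ofReal (Filter.liminf
        (fun n : ℕ => ((R ∩ Set.Iio n).ncard : ℝ) / (n : ℝ)) Filter.atTop) :=
  dimH_UR_eq_lower_density_general φ hdist R

end CantorGroup
end

section
/- Let E be the Cantor group, the set of all sequences x : ℕ → ℤ/2ℤ under pointwise addition, equipped with the ultrametric d(x,y) = 2^{-n} for distinct x,y, where n is the least index with x(n) ≠ y(n). For R ⊆ ℕ, let U_R = { x ∈ E : x(n) = 0 for all n ∉ R }, a closed subgroup of E. Then the upper box dimension of U_R equals the upper asymptotic density of R, i.e. limsup_{α→0+} log N_α(U_R)/log(1/α) = limsup_{n→∞} |R ∩ {0,…,n−1}| / n, and the lower box dimension of U_R equals the lower asymptotic density liminf_{n→∞} |R ∩ {0,…,n−1}| / n. -/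
/-!
Let `n = ⌈log₂ α⁻¹⌉`, the least `n` with `2⁻ⁿ ≤ α`. Two points of `E` are within `α` iff they
agree on `[0, n)`, so on `U_R` "being within `α`" is an equivalence relation whose classes are
the restrictions to `R ∩ [0, n)`; hence `N_α(U_R) = 2 ^ |R ∩ [0, n)|` exactly, and
`log N_α / log (1/α) = |R ∩ [0, n)| / log₂ α⁻¹` differs from `|R ∩ [0, n)| / n` by at most
`1 / log₂ α⁻¹ → 0`. Since `α ↦ n` maps `𝓝[>] 0` onto `atTop`, the limsup and liminf over scales
are those of the densities.
-/

open Filter MeasureTheory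

namespace CantorGroup

/-- `coverNum A α` is the least cardinality of a cover of `A` by sets of diameter at
most `α` (with junk value `0` if no finite such cover exists). -/
noncomputable def coverNum {X : Type*} [MetricSpace X] (A : Set X) (α : ℝ) : ℕ :=
  sInf {k : ℕ | ∃ 𝒞 : Finset (Set X), 𝒞.card = k ∧
    (∀ E ∈ 𝒞, Metric.diam E ≤ α) ∧ A ⊆ ⋃ E ∈ 𝒞, E}

/-- The lower box (Minkowski) dimension of a set in a metric space. -/
noncomputable def lowerBoxDim {X : Type*} [MetricSpace X] (A : Set X) : ℝ :=
  Filter.liminf (fun α : ℝ => Real.log (coverNum A α) / Real.log (1 / α))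
    (nhdsWithin 0 (Set.Ioi 0))

/-- The upper box (Minkowski) dimension of a set in a metric space. -/
noncomputable def upperBoxDim {X : Type*} [MetricSpace X] (A : Set X) : ℝ :=
  Filter.limsup (fun α : ℝ => Real.log (coverNum A α) / Real.log (1 / α))
    (nhdsWithin 0 (Set.Ioi 0))

open Set Topology

section LimsupAdd

variable {ι α : Type*} [ConditionallyCompleteLinearOrder α] [AddCommGroup α] [DenselyOrdered α]
  [AddLeftMono α] [TopologicalSpace α] [OrderTopology α] {f : Filter ι} [f.NeBot] {u v : ι → α}

lemma limsup_eq_of_tendsto_sub (hu : IsBoundedUnder (· ≤ ·) f u)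
    (hu' : IsBoundedUnder (· ≥ ·) f u) (h : Tendsto (v - u) f (𝓝 0)) : limsup v f = limsup u f := by
  have hv : v = u + (v - u) := (add_sub_cancel u v).symm
  rw [hv]
  refine le_antisymm ?_ ?_
  · calc limsup (u + (v - u)) f ≤ limsup u f + limsup (v - u) f :=
          limsup_add_le hu' hu h.isBoundedUnder_ge.isCoboundedUnder_le h.isBoundedUnder_le
      _ = limsup u f := by rw [h.limsup_eq, add_zero]
  · calc limsup u f = limsup u f + liminf (v - u) f := by rw [h.liminf_eq, add_zero]
      _ ≤ limsup (u + (v - u)) f :=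
          le_limsup_add hu hu'.isCoboundedUnder_le h.isBoundedUnder_le h.isBoundedUnder_ge

lemma liminf_eq_of_tendsto_sub (hu : IsBoundedUnder (· ≤ ·) f u)
    (hu' : IsBoundedUnder (· ≥ ·) f u) (h : Tendsto (v - u) f (𝓝 0)) : liminf v f = liminf u f := by
  have hv : v = (v - u) + u := (sub_add_cancel v u).symm
  rw [hv]
  refine le_antisymm ?_ ?_
  · calc liminf ((v - u) + u) f ≤ limsup (v - u) f + liminf u f :=
          liminf_add_le h.isBoundedUnder_ge h.isBoundedUnder_le hu' hu.isCoboundedUnder_ge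
      _ = liminf u f := by rw [h.limsup_eq, zero_add]
  · calc liminf u f = liminf (v - u) f + liminf u f := by rw [h.liminf_eq, zero_add]
      _ ≤ liminf ((v - u) + u) f :=
          le_liminf_add h.isBoundedUnder_ge h.isBoundedUnder_le hu' hu.isCoboundedUnder_ge

end LimsupAdd

section CoverNum

variable {X : Type*} [MetricSpace X]

lemma coverNum_le_card {A : Set X} {α : ℝ} (𝒞 : Finset (Set X))
    (hdiam : ∀ E ∈ 𝒞, Metric.diam E ≤ α) (hcover : A ⊆ ⋃ E ∈ 𝒞, E) : coverNum A α ≤ 𝒞.card :=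
  Nat.sInf_le ⟨𝒞, rfl, hdiam, hcover⟩

lemma coverNum_image_eq_ncard [BoundedSpace X] {Y β : Type*} [Finite β] {f : Y → X} {B : Set Y}
    {α : ℝ} (hα : 0 ≤ α) (ρ : Y → β)
    (hρ : ∀ x ∈ B, ∀ y ∈ B, dist (f x) (f y) ≤ α ↔ ρ x = ρ y) :
    coverNum (f '' B) α = (ρ '' B).ncard := by
  classical
  set fibres : Finset (Set X) :=
    (toFinite (ρ '' B)).toFinset.image fun b => f '' (B ∩ ρ ⁻¹' {b})
  have hfibres_diam : ∀ E ∈ fibres, Metric.diam E ≤ α := by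
    simp only [fibres, Finset.mem_image, Finite.mem_toFinset, forall_exists_index, and_imp]
    rintro _ b - rfl
    refine Metric.diam_le_of_forall_dist_le hα ?_
    rintro _ ⟨x, ⟨hx, hxb⟩, rfl⟩ _ ⟨y, ⟨hy, hyb⟩, rfl⟩
    exact (hρ x hx y hy).2 (hxb.trans hyb.symm)
  have hfibres_cover : f '' B ⊆ ⋃ E ∈ fibres, E := by
    rintro _ ⟨x, hx, rfl⟩
    exact mem_biUnion
      (Finset.mem_image_of_mem _ ((Finite.mem_toFinset _).2 (mem_image_of_mem ρ hx)))
      (mem_image_of_mem f ⟨hx, rfl⟩)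
  refine le_antisymm ?_ (le_csInf ⟨_, fibres, rfl, hfibres_diam, hfibres_cover⟩ ?_)
  · calc coverNum (f '' B) α ≤ fibres.card := coverNum_le_card fibres hfibres_diam hfibres_cover
      _ ≤ (toFinite (ρ '' B)).toFinset.card := Finset.card_image_le
      _ = (ρ '' B).ncard := (ncard_eq_toFinset_card _ _).symm
  rintro _ ⟨𝒞, rfl, hdiam, hcover⟩
  have hpick : ∀ b, ∃ E : Set X, b ∈ ρ '' B → E ∈ 𝒞 ∧ ∃ x ∈ B, ρ x = b ∧ f x ∈ E := by
    intro b
    by_cases hb : b ∈ ρ '' B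
    · obtain ⟨x, hx, rfl⟩ := hb
      obtain ⟨E, hE, hxE⟩ := mem_iUnion₂.1 (hcover (mem_image_of_mem f hx))
      exact ⟨E, fun _ => ⟨hE, x, hx, rfl, hxE⟩⟩
    · exact ⟨∅, fun h => absurd h hb⟩
  choose E hE using hpick
  rw [← ncard_coe_finset]
  refine ncard_le_ncard_of_injOn E (fun b hb => (hE b hb).1) ?_ 𝒞.finite_toSet
  intro b hb b' hb' hbb'
  obtain ⟨hE𝒞, x, hx, rfl, hxE⟩ := hE b hb
  obtain ⟨-, y, hy, rfl, hyE⟩ := hE b' hb'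
  rw [← hbb'] at hyE
  -- `Metric.diam` of an unbounded set is `0`: this is where `BoundedSpace X` is needed.
  exact (hρ x hx y hy).1 <|
    (Metric.dist_le_diam_of_mem (Bornology.IsBounded.all _) hxE hyE).trans (hdiam _ hE𝒞)

end CoverNum

noncomputable def scaleIndex (α : ℝ) : ℕ := ⌈Real.logb 2 α⁻¹⌉₊

lemma scaleIndex_le_iff {α : ℝ} (hα : 0 < α) {n : ℕ} :
    scaleIndex α ≤ n ↔ (2 : ℝ)⁻¹ ^ n ≤ α := by
  rw [scaleIndex, Nat.ceil_le, Real.logb_le_iff_le_rpow one_lt_two (inv_pos.2 hα),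
    Real.rpow_natCast, inv_pow, inv_le_comm₀ hα (by positivity)]

lemma scaleIndex_inv_two_pow (n : ℕ) : scaleIndex ((2 : ℝ)⁻¹ ^ n) = n :=
  eq_of_forall_ge_iff fun m => by
    rw [scaleIndex_le_iff (by positivity),
      pow_le_pow_iff_right_of_lt_one₀ (by norm_num) (by norm_num)]

lemma map_scaleIndex_nhdsGT_zero : map scaleIndex (𝓝[>] 0) = atTop := by
  refine le_antisymm (tendsto_nat_ceil_atTop.comp
    ((Real.tendsto_logb_atTop one_lt_two).comp tendsto_inv_nhdsGT_zero)) ?_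
  have hpow : Tendsto (fun n : ℕ => (2 : ℝ)⁻¹ ^ n) atTop (𝓝[>] 0) :=
    tendsto_nhdsWithin_of_tendsto_nhds_of_eventually_within _
      (tendsto_pow_atTop_nhds_zero_of_lt_one (by norm_num) (by norm_num))
      (Eventually.of_forall fun n => mem_Ioi.2 (by positivity))
  calc atTop = map (scaleIndex ∘ fun n : ℕ => (2 : ℝ)⁻¹ ^ n) atTop := by
        rw [show scaleIndex ∘ (fun n : ℕ => (2 : ℝ)⁻¹ ^ n) = id from
          funext scaleIndex_inv_two_pow, map_id]
    _ ≤ map scaleIndex (𝓝[>] 0) := by rw [← map_map]; exact map_mono hpow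

lemma cantorDist_le_one (x y : ℕ → ZMod 2) : cantorDist x y ≤ 1 := by
  unfold cantorDist
  split_ifs
  exacts [pow_le_one₀ (by norm_num) (by norm_num), zero_le_one]

lemma cantorDist_le_iff {x y : ℕ → ZMod 2} {α : ℝ} (hα : 0 < α) :
    cantorDist x y ≤ α ↔ ∀ i < scaleIndex α, x i = y i := by
  unfold cantorDist
  split_ifs with h
  · rw [← scaleIndex_le_iff hα, Nat.le_find_iff]
    simp only [not_not]
  · push Not at h
    simp [h, hα.le]

lemma domRestrict_image_UR {R S : Set ℕ} (hS : S ⊆ R) : S.domRestrict '' UR R = univ := by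
  classical
  refine eq_univ_of_forall fun v => ⟨fun i => if h : i ∈ S then v ⟨i, h⟩ else 0, ?_, ?_⟩
  · intro i hi
    simp [show i ∉ S from fun h => hi (hS h)]
  · ext ⟨i, hi⟩
    simp [Set.domRestrict, hi]

lemma ncard_domRestrict_image_UR (R : Set ℕ) (n : ℕ) :
    ((R ∩ Iio n).domRestrict '' UR R).ncard = 2 ^ (R ∩ Iio n).ncard := by
  rw [domRestrict_image_UR inter_subset_left, ncard_univ, Nat.card_fun, Nat.card_zmod,
    Nat.card_coe_set_eq]

lemma forall_lt_eq_iff_domRestrict_eq {R : Set ℕ} {x y : ℕ → ZMod 2} (hx : x ∈ UR R)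
    (hy : y ∈ UR R) (n : ℕ) :
    (∀ i < n, x i = y i) ↔ (R ∩ Iio n).domRestrict x = (R ∩ Iio n).domRestrict y := by
  refine ⟨fun h => funext fun i => h i i.2.2, fun h i hi => ?_⟩
  by_cases hiR : i ∈ R
  · exact congrFun h ⟨i, hiR, hi⟩
  · rw [hx i hiR, hy i hiR]

noncomputable def boxRatio {X : Type*} [MetricSpace X] (A : Set X) (α : ℝ) : ℝ :=
  Real.log (coverNum A α) / Real.log (1 / α)

noncomputable def partialDensity (R : Set ℕ) (n : ℕ) : ℝ := ((R ∩ Iio n).ncard : ℝ) / n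

lemma ncard_inter_Iio_le (R : Set ℕ) (n : ℕ) : (R ∩ Iio n).ncard ≤ n :=
  (ncard_le_ncard inter_subset_right (finite_Iio n)).trans_eq (ncard_Iio_nat n)

lemma partialDensity_nonneg (R : Set ℕ) (n : ℕ) : 0 ≤ partialDensity R n := by
  unfold partialDensity; positivity

lemma partialDensity_le_one (R : Set ℕ) (n : ℕ) : partialDensity R n ≤ 1 :=
  div_le_one_of_le₀ (by exact_mod_cast ncard_inter_Iio_le R n) n.cast_nonneg

lemma abs_div_sub_div_natCeil_le {c t : ℝ} (ht : 0 < t) (hc₀ : 0 ≤ c) (hc : c ≤ ⌈t⌉₊) :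
    |c / t - c / ⌈t⌉₊| ≤ t⁻¹ := by
  have hle : t ≤ ⌈t⌉₊ := Nat.le_ceil t
  have hlt : (⌈t⌉₊ : ℝ) < t + 1 := Nat.ceil_lt_add_one ht.le
  have hm : (0 : ℝ) < ⌈t⌉₊ := ht.trans_le hle
  have hdiff : c / t - c / ⌈t⌉₊ = c * (⌈t⌉₊ - t) / (t * ⌈t⌉₊) := by field_simp
  rw [hdiff, abs_of_nonneg (div_nonneg (mul_nonneg hc₀ (by linarith)) (by positivity)),
    div_le_iff₀ (by positivity)]
  calc c * (⌈t⌉₊ - t) ≤ ⌈t⌉₊ * 1 := by gcongr; linarith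
    _ = t⁻¹ * (t * ⌈t⌉₊) := by field_simp

section Isometry

variable {X : Type*} [MetricSpace X] {φ : (ℕ → ZMod 2) → X}
  (hdist : ∀ x y : ℕ → ZMod 2, dist (φ x) (φ y) = cantorDist x y)
include hdist

lemma boundedSpace_of_surjective (hφ : Function.Surjective φ) : BoundedSpace X :=
  Metric.boundedSpace_iff.2
    ⟨1, hφ.forall₂.2 fun x y => (hdist x y).trans_le (cantorDist_le_one x y)⟩

lemma coverNum_image_UR (hφ : Function.Surjective φ) (R : Set ℕ) {α : ℝ} (hα : 0 < α) :
    coverNum (φ '' UR R) α = 2 ^ (R ∩ Iio (scaleIndex α)).ncard := by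
  have := boundedSpace_of_surjective hdist hφ
  rw [← ncard_domRestrict_image_UR,
    coverNum_image_eq_ncard hα.le (R ∩ Iio (scaleIndex α)).domRestrict]
  intro x hx y hy
  rw [hdist, cantorDist_le_iff hα, forall_lt_eq_iff_domRestrict_eq hx hy]

lemma boxRatio_image_UR (hφ : Function.Surjective φ) (R : Set ℕ) {α : ℝ} (hα : 0 < α) :
    boxRatio (φ '' UR R) α = (R ∩ Iio (scaleIndex α)).ncard / Real.logb 2 α⁻¹ := by
  rw [boxRatio, coverNum_image_UR hdist hφ R hα, Nat.cast_pow, Nat.cast_ofNat, Real.log_pow,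
    one_div, Real.logb, div_div_eq_mul_div]

lemma tendsto_boxRatio_image_UR_sub (hφ : Function.Surjective φ) (R : Set ℕ) :
    Tendsto (boxRatio (φ '' UR R) - partialDensity R ∘ scaleIndex) (𝓝[>] 0) (𝓝 0) := by
  have hlog : Tendsto (fun α : ℝ => Real.logb 2 α⁻¹) (𝓝[>] 0) atTop :=
    (Real.tendsto_logb_atTop one_lt_two).comp tendsto_inv_nhdsGT_zero
  refine squeeze_zero_norm' ?_ hlog.inv_tendsto_atTop
  filter_upwards [hlog.eventually_gt_atTop 0, self_mem_nhdsWithin] with α hL hα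
  rw [Pi.sub_apply, boxRatio_image_UR hdist hφ R hα, Function.comp_apply, partialDensity,
    Real.norm_eq_abs]
  exact abs_div_sub_div_natCeil_le hL (Nat.cast_nonneg _)
    (by exact_mod_cast ncard_inter_Iio_le R _)

end Isometry

/-- In the Cantor group `E`, the upper box dimension of the closed subgroup
`U_R` equals the upper asymptotic density of `R`, and the lower box dimension of `U_R` equals
the lower asymptotic density of `R`. -/
theorem boxDims_UR_eq_densities
    {X : Type*} [MetricSpace X] (φ : (ℕ → ZMod 2) → X)
    (hbij : Function.Bijective φ)
    (hdist : ∀ x y : ℕ → ZMod 2, dist (φ x) (φ y) = cantorDist x y)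
    (R : Set ℕ) :
    upperBoxDim (φ '' UR R) =
        Filter.limsup (fun n : ℕ => ((R ∩ Set.Iio n).ncard : ℝ) / (n : ℝ)) Filter.atTop ∧
      lowerBoxDim (φ '' UR R) =
        Filter.liminf (fun n : ℕ => ((R ∩ Set.Iio n).ncard : ℝ) / (n : ℝ)) Filter.atTop := by
  have hdiff := tendsto_boxRatio_image_UR_sub hdist hbij.surjective R
  have hle : IsBoundedUnder (· ≤ ·) (𝓝[>] 0) (partialDensity R ∘ scaleIndex) :=
    isBoundedUnder_of ⟨1, fun _ => partialDensity_le_one R _⟩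
  have hge : IsBoundedUnder (· ≥ ·) (𝓝[>] 0) (partialDensity R ∘ scaleIndex) :=
    isBoundedUnder_of ⟨0, fun _ => partialDensity_nonneg R _⟩
  constructor
  · calc upperBoxDim (φ '' UR R) = limsup (partialDensity R ∘ scaleIndex) (𝓝[>] 0) :=
          limsup_eq_of_tendsto_sub hle hge hdiff
      _ = limsup (partialDensity R) atTop := by rw [limsup_comp, map_scaleIndex_nhdsGT_zero]
  · calc lowerBoxDim (φ '' UR R) = liminf (partialDensity R ∘ scaleIndex) (𝓝[>] 0) :=
          liminf_eq_of_tendsto_sub hle hge hdiff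
      _ = liminf (partialDensity R) atTop := by rw [liminf_comp, map_scaleIndex_nhdsGT_zero]

end CantorGroup
end
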